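/- arXiv:2101.12141 — 10 statements merged into one kernel-verified Lean document; each statement's English description precedes it below -/
import Mathlib

section
/- Let A ⊆ H^n be a set of Hermitian matrices and suppose S in the real span of A is invertible. If A is SDC via an invertible P, then for every A in A, the matrix S⁻¹A is diagonalizable (via similarity) with all eigenvalues real, and the set {S⁻¹A : A ∈ A} consists of pairwise commuting matrices. -/
open Matrix

/-- A Hermitian matrix that becomes diagonal under `Pᴴ · P` has real diagonal form. -/
lemma herm_diag_real {n : ℕ} (P M : Matrix (Fin n) (Fin n) ℂ)
    (h1 : M.IsHermitian) (h2 : (Pᴴ * M * P).IsDiag) :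
    ∃ d : Fin n → ℝ, Pᴴ * M * P = Matrix.diagonal (fun i => (d i : ℂ)) := by
  have hH : (Pᴴ * M * P).IsHermitian := Matrix.isHermitian_conjTranspose_mul_mul P h1
  refine ⟨fun i => ((Pᴴ * M * P) i i).re, ?_⟩
  ext i j
  by_cases hij : i = j
  · subst hij
    simp only [Matrix.diagonal_apply_eq]
    have := congrFun (congrFun hH i) i
    simp only [Matrix.conjTranspose_apply] at this
    exact (Complex.conj_eq_iff_re.mp this).symm
  · rw [Matrix.diagonal_apply_ne _ hij]
    exact h2 hij

/-- If a set of Hermitian matrices is SDC and `S` is an invertible element of its real span,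
then `S⁻¹A` is diagonalizable with real eigenvalues for each `A` in the set, and the
matrices `S⁻¹A` pairwise commute. -/
theorem sdc_imp_inv_mul_diagonalizable_real_commuting
    {n : ℕ} (𝒜 : Set (Matrix (Fin n) (Fin n) ℂ))
    (hherm : ∀ A ∈ 𝒜, A.IsHermitian)
    (S : Matrix (Fin n) (Fin n) ℂ) (hS : S ∈ Submodule.span ℝ 𝒜) (hSinv : IsUnit S)
    (P : Matrix (Fin n) (Fin n) ℂ) (hP : IsUnit P)
    (hdiag : ∀ A ∈ 𝒜, (Pᴴ * A * P).IsDiag) :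
    (∀ A ∈ 𝒜, ∃ (Q : Matrix (Fin n) (Fin n) ℂ) (d : Fin n → ℝ), IsUnit Q ∧
      S⁻¹ * A = Q * Matrix.diagonal (fun i => (d i : ℂ)) * Q⁻¹) ∧
    (∀ A ∈ 𝒜, ∀ B ∈ 𝒜, Commute (S⁻¹ * A) (S⁻¹ * B)) := by
  have hPdet : IsUnit P.det := (Matrix.isUnit_iff_isUnit_det P).mp hP
  have hPHdet : IsUnit Pᴴ.det := by
    rw [Matrix.det_conjTranspose]; exact hPdet.star
  -- S is Hermitian and Pᴴ S P is diagonal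
  have hboth : S.IsHermitian ∧ (Pᴴ * S * P).IsDiag := by
    clear hSinv
    induction hS using Submodule.span_induction with
    | mem x hx => exact ⟨hherm x hx, hdiag x hx⟩
    | zero => simp [Matrix.isHermitian_zero, Matrix.isDiag_zero]
    | add x y _ _ hx hy =>
      refine ⟨hx.1.add hy.1, ?_⟩
      have : Pᴴ * (x + y) * P = Pᴴ * x * P + Pᴴ * y * P := by
        rw [Matrix.mul_add, Matrix.add_mul]
      rw [this]; exact hx.2.add hy.2
    | smul r x _ hx =>
      constructor
      · unfold Matrix.IsHermitian at *
        rw [Matrix.conjTranspose_smul, hx.1, star_trivial]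
      · have : Pᴴ * (r • x) * P = r • (Pᴴ * x * P) := by
          rw [Matrix.mul_smul, Matrix.smul_mul]
        rw [this]; exact hx.2.smul r
  obtain ⟨e, he⟩ := herm_diag_real P S hboth.1 hboth.2
  have hPH : IsUnit Pᴴ := (Matrix.isUnit_iff_isUnit_det _).mpr hPHdet
  set D : Matrix (Fin n) (Fin n) ℂ := Matrix.diagonal (fun i => (e i : ℂ)) with hD
  set D' : Matrix (Fin n) (Fin n) ℂ := Matrix.diagonal (fun i => ((e i : ℂ))⁻¹) with hD'
  have hDunit : IsUnit D := he ▸ (hPH.mul hSinv).mul hP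
  have hDdet : IsUnit D.det := (Matrix.isUnit_iff_isUnit_det _).mp hDunit
  have he0 : ∀ i, (e i : ℂ) ≠ 0 := by
    intro i
    have h1 := hDdet
    rw [hD, Matrix.det_diagonal] at h1
    have h2 : (∏ j, (e j : ℂ)) ≠ 0 := h1.ne_zero
    exact Finset.prod_ne_zero_iff.mp h2 i (Finset.mem_univ i)
  have hDD' : D * D' = 1 := by
    rw [hD, hD', Matrix.diagonal_mul_diagonal]
    have : (fun i => (e i : ℂ) * ((e i : ℂ))⁻¹) = fun _ => (1 : ℂ) := by
      funext i; exact mul_inv_cancel₀ (he0 i)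
    rw [this, Matrix.diagonal_one]
  -- cancellation helpers
  have cPPi : ∀ X : Matrix (Fin n) (Fin n) ℂ, P * (P⁻¹ * X) = X := fun X => by
    rw [← Matrix.mul_assoc, Matrix.mul_nonsing_inv P hPdet, Matrix.one_mul]
  have cPiP : ∀ X : Matrix (Fin n) (Fin n) ℂ, P⁻¹ * (P * X) = X := fun X => by
    rw [← Matrix.mul_assoc, Matrix.nonsing_inv_mul P hPdet, Matrix.one_mul]
  have cHiH : ∀ X : Matrix (Fin n) (Fin n) ℂ, (Pᴴ)⁻¹ * (Pᴴ * X) = X := fun X => by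
    rw [← Matrix.mul_assoc, Matrix.nonsing_inv_mul Pᴴ hPHdet, Matrix.one_mul]
  have cDDi : ∀ X : Matrix (Fin n) (Fin n) ℂ, D * (D' * X) = X := fun X => by
    rw [← Matrix.mul_assoc, hDD', Matrix.one_mul]
  have hSinvEq : S⁻¹ = P * D' * Pᴴ := by
    apply Matrix.inv_eq_right_inv
    have hSeq : S = (Pᴴ)⁻¹ * (D * P⁻¹) := by
      rw [← he]
      simp only [Matrix.mul_assoc, Matrix.mul_nonsing_inv P hPdet, Matrix.mul_one]
      rw [cHiH]
    rw [hSeq]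
    simp only [Matrix.mul_assoc, cPiP, cDDi]
    exact Matrix.nonsing_inv_mul Pᴴ hPHdet
  -- representation of S⁻¹ * A
  have hrep : ∀ A ∈ 𝒜, ∃ d : Fin n → ℝ,
      S⁻¹ * A = P * Matrix.diagonal (fun i => (d i : ℂ)) * P⁻¹ := by
    intro A hA
    obtain ⟨f, hf⟩ := herm_diag_real P A (hherm A hA) (hdiag A hA)
    refine ⟨fun i => (e i)⁻¹ * f i, ?_⟩
    have step : S⁻¹ * A = P * (D' * ((Pᴴ * A * P) * P⁻¹)) := by
      rw [hSinvEq]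
      simp only [Matrix.mul_assoc, Matrix.mul_nonsing_inv P hPdet, Matrix.mul_one]
    rw [step, hf, hD']
    rw [← Matrix.mul_assoc (Matrix.diagonal _) _ _, Matrix.diagonal_mul_diagonal]
    simp only [← Matrix.mul_assoc]
    have : (fun i => ((e i : ℂ))⁻¹ * (f i : ℂ)) = fun i => (((e i)⁻¹ * f i : ℝ) : ℂ) := by
      funext i; push_cast; ring
    rw [this]
  refine ⟨fun A hA => ?_, fun A hA B hB => ?_⟩
  · obtain ⟨d, hd⟩ := hrep A hA
    exact ⟨P, d, hP, hd⟩
  · obtain ⟨dA, hdA⟩ := hrep A hA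
    obtain ⟨dB, hdB⟩ := hrep B hB
    have key : ∀ u v : Fin n → ℂ,
        (P * Matrix.diagonal u * P⁻¹) * (P * Matrix.diagonal v * P⁻¹) =
          P * Matrix.diagonal (fun i => u i * v i) * P⁻¹ := by
      intro u v
      rw [← Matrix.diagonal_mul_diagonal]
      simp only [Matrix.mul_assoc, cPiP]
    show S⁻¹ * A * (S⁻¹ * B) = S⁻¹ * B * (S⁻¹ * A)
    rw [hdA, hdB, key, key]
    have : (fun i => (dA i : ℂ) * (dB i : ℂ)) = fun i => (dB i : ℂ) * (dA i : ℂ) := by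
      funext i; ring
    rw [this]
end

section
/- Let A ⊆ H^n be a set of Hermitian matrices containing an invertible matrix S in its real span such that {S⁻¹A : A ∈ A} is a commuting family of diagonalizable matrices with real eigenvalues. Then A is simultaneously diagonalizable via congruence. -/
/-!
The matrices `S⁻¹A` commute and are diagonalizable, so `ℂⁿ` is the direct sum of their joint
eigenspaces `V χ`, and `A x = χ(A) • S x` for `x ∈ V χ`. As `A` and `S` are Hermitian and the
eigenvalues `χ(A)` are real, `V χ` and `V ψ` are orthogonal for the Hermitian form `x* S y`
whenever `χ ≠ ψ`. A basis of each `V χ` diagonalizing this form (spectral theorem for its Gram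
matrix) yields a basis of `ℂⁿ` whose matrix `P` makes `Pᴴ S P` diagonal, and then also every
`Pᴴ A P`, whose columns are multiples of those of `Pᴴ S P`.
-/

open Matrix Module End

theorem IsSelfAdjoint.of_mem_span {R A : Type*} [Semiring R] [StarMul R] [TrivialStar R]
    [AddCommGroup A] [Module R A] [StarAddMonoid A] [StarModule R A] {s : Set A}
    (hs : ∀ a ∈ s, IsSelfAdjoint a) {a : A} (ha : a ∈ Submodule.span R s) : IsSelfAdjoint a :=
  Submodule.span_le (p := selfAdjoint.submodule R A) |>.mpr hs ha

theorem Module.End.isInternal_iInf_eigenspace_of_commute {ι K V : Type*} [Field K]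
    [DecidableEq (ι → K)] [AddCommGroup V] [Module K V] [FiniteDimensional K V]
    (f : ι → End K V) (hcomm : Pairwise fun i j ↦ Commute (f i) (f j))
    (hss : ∀ i μ, (f i).maxGenEigenspace μ = (f i).eigenspace μ)
    (htop : ∀ i, ⨆ μ, (f i).eigenspace μ = ⊤) :
    DirectSum.IsInternal fun χ : ι → K ↦ ⨅ i, (f i).eigenspace (χ i) := by
  simp_rw [← hss] at htop ⊢
  refine DirectSum.isInternal_submodule_of_iSupIndep_of_iSup_eq_top
    (independent_iInf_maxGenEigenspace_of_forall_mapsTo f fun i j μ ↦ ?_)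
    (iSup_iInf_maxGenEigenspace_eq_top_of_iSup_maxGenEigenspace_eq_top_of_commute f hcomm htop)
  refine mapsTo_maxGenEigenspace_of_comm ?_ μ
  rcases eq_or_ne j i with rfl | hij
  · exact Commute.refl _
  · exact hcomm hij

namespace Matrix

theorem conjTranspose_mul_mul_apply {α m n : Type*} [NonUnitalSemiring α] [StarRing α]
    [Fintype n] (P : Matrix n m α) (M : Matrix n n α) (i j : m) :
    (Pᴴ * M * P) i j = star (Pᵀ i) ⬝ᵥ M *ᵥ Pᵀ j := by
  rw [dotProduct_mulVec, mul_apply']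
  rfl

section Diagonalizable

variable {K n : Type*} [Field K] [Fintype n] [DecidableEq n] {Q : Matrix n n K}

theorem exists_basis_toLin'_mul_diagonal_mul_inv (hQ : IsUnit Q) (d : n → K) :
    ∃ b : Basis n K (n → K), toLin' (Q * diagonal d * Q⁻¹) = toLin b b (diagonal d) := by
  have hdet : IsUnit Q.det := (isUnit_iff_isUnit_det Q).mp hQ
  let b := (Pi.basisFun K n).map (toLinearEquiv (Pi.basisFun K n) Q hdet)
  have hb (i : n) : (b i : n → K) = Q *ᵥ Pi.single i 1 := by
    simp [b, toLinearEquiv, toLin_eq_toLin']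
  refine ⟨b, b.ext fun i ↦ ?_⟩
  rw [toLin_self, Fintype.sum_eq_single i fun j hj ↦ by rw [diagonal_apply_ne _ hj, zero_smul],
    diagonal_apply_eq, toLin'_apply, hb, mulVec_mulVec, Matrix.mul_assoc, Matrix.mul_assoc,
    nonsing_inv_mul Q hdet, Matrix.mul_one, ← mulVec_mulVec, diagonal_mulVec_single, mul_one,
    ← mulVec_smul, ← Pi.single_smul, smul_eq_mul, mul_one]

theorem hasEigenvalue_toLin'_mul_diagonal_mul_inv_iff (hQ : IsUnit Q) (d : n → K) {μ : K} :
    HasEigenvalue (toLin' (Q * diagonal d * Q⁻¹)) μ ↔ ∃ i, d i = μ := by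
  obtain ⟨b, hb⟩ := exists_basis_toLin'_mul_diagonal_mul_inv hQ d
  rw [hb, hasEigenvalue_toLin_diagonal_iff]

theorem maxGenEigenspace_toLin'_mul_diagonal_mul_inv (hQ : IsUnit Q) (d : n → K) (μ : K) :
    maxGenEigenspace (toLin' (Q * diagonal d * Q⁻¹)) μ =
      eigenspace (toLin' (Q * diagonal d * Q⁻¹)) μ := by
  obtain ⟨b, hb⟩ := exists_basis_toLin'_mul_diagonal_mul_inv hQ d
  rw [hb, maxGenEigenspace_toLin_diagonal_eq_eigenspace]

theorem iSup_eigenspace_toLin'_mul_diagonal_mul_inv_eq_top (hQ : IsUnit Q) (d : n → K) :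
    ⨆ μ, eigenspace (toLin' (Q * diagonal d * Q⁻¹)) μ = ⊤ := by
  obtain ⟨b, hb⟩ := exists_basis_toLin'_mul_diagonal_mul_inv hQ d
  rw [hb, iSup_eigenspace_toLin_diagonal_eq_top]

end Diagonalizable

section Congruence

variable {K n : Type*} [Field K] [Fintype n] {S : Matrix n n K}

theorem mulVec_eq_smul_mulVec_of_mem_eigenspace [DecidableEq n] (hS : IsUnit S)
    {A : Matrix n n K} {μ : K} {x : n → K} (hx : x ∈ eigenspace (toLin' (S⁻¹ * A)) μ) :
    A *ᵥ x = μ • S *ᵥ x := by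
  rw [mem_eigenspace_iff, toLin'_apply, ← mulVec_mulVec] at hx
  rw [← mulVec_smul, ← hx, mulVec_mulVec, mul_nonsing_inv S ((isUnit_iff_isUnit_det S).mp hS),
    one_mulVec]

variable [StarRing K]

theorem star_dotProduct_mulVec_eq_zero_of_mulVec_eq_smul (hS : S.IsHermitian)
    {A : Matrix n n K} (hA : A.IsHermitian) {x y : n → K} {μ ν : K} (hμ : star μ = μ)
    (hμν : μ ≠ ν) (hx : A *ᵥ x = μ • S *ᵥ x) (hy : A *ᵥ y = ν • S *ᵥ y) :
    star x ⬝ᵥ S *ᵥ y = 0 := by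
  have hAx : star x ⬝ᵥ A *ᵥ y = μ * (star x ⬝ᵥ S *ᵥ y) := by
    rw [dotProduct_mulVec, ← hA.eq, ← star_mulVec, hx, star_smul, hμ, smul_dotProduct,
      star_mulVec, hS.eq, ← dotProduct_mulVec, smul_eq_mul]
  have hAy : star x ⬝ᵥ A *ᵥ y = ν * (star x ⬝ᵥ S *ᵥ y) := by
    rw [hy, dotProduct_smul, smul_eq_mul]
  have : (μ - ν) * (star x ⬝ᵥ S *ᵥ y) = 0 := by rw [sub_mul, ← hAx, ← hAy, sub_self]
  exact (mul_eq_zero.mp this).resolve_left (sub_ne_zero.mpr hμν)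

theorem star_dotProduct_mulVec_eq_zero_of_mem_iInf_eigenspace [DecidableEq n] {ι : Type*}
    (hS : S.IsHermitian) (hSu : IsUnit S) {A : ι → Matrix n n K} (hA : ∀ i, (A i).IsHermitian)
    (hreal : ∀ i μ, HasEigenvalue (toLin' (S⁻¹ * A i)) μ → star μ = μ) {χ ψ : ι → K}
    (hχψ : χ ≠ ψ) {x y : n → K}
    (hx : x ∈ ⨅ i, eigenspace (toLin' (S⁻¹ * A i)) (χ i))
    (hy : y ∈ ⨅ i, eigenspace (toLin' (S⁻¹ * A i)) (ψ i)) : star x ⬝ᵥ S *ᵥ y = 0 := by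
  obtain ⟨i, hi⟩ := Function.ne_iff.mp hχψ
  have hxi := (Submodule.mem_iInf _).mp hx i
  rcases eq_or_ne x 0 with rfl | hx0
  · simp
  exact star_dotProduct_mulVec_eq_zero_of_mulVec_eq_smul hS (hA i)
    (hreal i _ (hasEigenvalue_of_hasEigenvector ⟨hxi, hx0⟩)) hi
    (mulVec_eq_smul_mulVec_of_mem_eigenspace hSu hxi)
    (mulVec_eq_smul_mulVec_of_mem_eigenspace hSu ((Submodule.mem_iInf _).mp hy i))

theorem isDiag_conjTranspose_mul_mul_toMatrix [DecidableEq n] {b : Basis n K (n → K)}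
    (hb : Pairwise fun i j ↦ star (b i) ⬝ᵥ S *ᵥ b j = 0) {A : Matrix n n K}
    (hA : ∀ j, ∃ c : K, A *ᵥ b j = c • S *ᵥ b j) :
    (((Pi.basisFun K n).toMatrix b)ᴴ * A * (Pi.basisFun K n).toMatrix b).IsDiag := by
  intro i j hij
  obtain ⟨c, hc⟩ := hA j
  rw [conjTranspose_mul_mul_apply]
  change star (b i) ⬝ᵥ A *ᵥ b j = 0
  rw [hc, dotProduct_smul, hb hij, smul_zero]

end Congruence

namespace IsHermitian

variable {𝕜 n : Type*} [RCLike 𝕜] [Fintype n] {S : Matrix n n 𝕜}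

theorem exists_basis_pairwise_star_dotProduct_mulVec_eq_zero (hS : S.IsHermitian)
    (W : Submodule 𝕜 (n → 𝕜)) :
    ∃ b : Basis (Fin (finrank 𝕜 W)) 𝕜 W,
      Pairwise fun i j ↦ star (b i : n → 𝕜) ⬝ᵥ S *ᵥ (b j : n → 𝕜) = 0 := by
  let b₀ := finBasis 𝕜 W
  let C : Matrix n (Fin (finrank 𝕜 W)) 𝕜 := of fun a k ↦ (b₀ k : n → 𝕜) a
  have hG : (Cᴴ * S * C).IsHermitian := by
    simp [IsHermitian, conjTranspose_mul, hS.eq, Matrix.mul_assoc]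
  let U : Matrix (Fin (finrank 𝕜 W)) (Fin (finrank 𝕜 W)) 𝕜 := hG.eigenvectorUnitary
  have hU : IsUnit U.det := (isUnit_iff_isUnit_det _).mp Unitary.isUnit_coe
  let b := b₀.map (toLinearEquiv b₀ U hU)
  have hb (i : Fin (finrank 𝕜 W)) : (b i : n → 𝕜) = (C * U)ᵀ i := by
    ext a
    simp [b, toLinearEquiv, toLin_self, mul_apply, C, mul_comm]
  have hCU : (C * U)ᴴ * S * (C * U) = diagonal (RCLike.ofReal ∘ hG.eigenvalues) := by
    rw [← hG.conjStarAlgAut_star_eigenvectorUnitary, conjTranspose_mul]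
    simp [U, Matrix.mul_assoc, star_eq_conjTranspose]
  refine ⟨b, fun i j hij ↦ ?_⟩
  simp only [hb, ← conjTranspose_mul_mul_apply, hCU, diagonal_apply_ne _ hij]

theorem exists_basis_pairwise_star_dotProduct_mulVec_eq_zero_of_isInternal {ι : Type*}
    [DecidableEq ι] [DecidableEq n] (hS : S.IsHermitian) {V : ι → Submodule 𝕜 (n → 𝕜)}
    (hV : DirectSum.IsInternal V)
    (horth : Pairwise fun χ ψ ↦ ∀ x ∈ V χ, ∀ y ∈ V ψ, star x ⬝ᵥ S *ᵥ y = 0) :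
    ∃ b : Basis n 𝕜 (n → 𝕜),
      (Pairwise fun i j ↦ star (b i) ⬝ᵥ S *ᵥ b j = 0) ∧ ∀ i, ∃ χ, b i ∈ V χ := by
  choose c hc using fun χ ↦ hS.exists_basis_pairwise_star_dotProduct_mulVec_eq_zero (V χ)
  let B := hV.collectedBasis c
  have hB : Pairwise fun a a' ↦ star (B a) ⬝ᵥ S *ᵥ B a' = 0 := by
    rintro ⟨χ, k⟩ ⟨ψ, l⟩ hne
    simp only [B, hV.collectedBasis_coe]
    by_cases hχψ : χ = ψ
    · subst hχψ
      exact hc χ fun hkl ↦ hne (by rw [hkl])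
    · exact horth hχψ _ (c χ k).2 _ (c ψ l).2
  let e := B.indexEquiv (Pi.basisFun 𝕜 n)
  refine ⟨B.reindex e, fun i j hij ↦ ?_, fun i ↦ ⟨(e.symm i).1, ?_⟩⟩
  · simp only [Basis.reindex_apply]
    exact hB (e.symm.injective.ne hij)
  · rw [B.reindex_apply]
    exact hV.collectedBasis_mem c _

end IsHermitian

end Matrix

/-- If `S` is an invertible element of the real span of a set of Hermitian matrices `𝒜`
such that the matrices `S⁻¹A`, `A ∈ 𝒜`, pairwise commute and are each diagonalizable with
real eigenvalues, then `𝒜` is simultaneously diagonalizable via congruence. -/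
theorem inv_mul_diagonalizable_real_commuting_imp_sdc
    {n : ℕ} (𝒜 : Set (Matrix (Fin n) (Fin n) ℂ))
    (hherm : ∀ A ∈ 𝒜, A.IsHermitian)
    (S : Matrix (Fin n) (Fin n) ℂ) (hS : S ∈ Submodule.span ℝ 𝒜) (hSinv : IsUnit S)
    (hdiagz : ∀ A ∈ 𝒜, ∃ (Q : Matrix (Fin n) (Fin n) ℂ) (d : Fin n → ℝ), IsUnit Q ∧
      S⁻¹ * A = Q * Matrix.diagonal (fun i => (d i : ℂ)) * Q⁻¹)
    (hcomm : ∀ A ∈ 𝒜, ∀ B ∈ 𝒜, Commute (S⁻¹ * A) (S⁻¹ * B)) :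
    ∃ P : Matrix (Fin n) (Fin n) ℂ, IsUnit P ∧ ∀ A ∈ 𝒜, (Pᴴ * A * P).IsDiag := by
  classical
  have hSh : S.IsHermitian := IsSelfAdjoint.of_mem_span hherm hS
  choose Q d hQ hSQ using hdiagz
  let f : 𝒜 → End ℂ (Fin n → ℂ) := fun A ↦ toLin' (S⁻¹ * A)
  have hf (A : 𝒜) :
      f A = toLin' (Q A A.2 * diagonal (fun i ↦ (d A A.2 i : ℂ)) * (Q A A.2)⁻¹) :=
    congrArg toLin' (hSQ A A.2)
  have hV : DirectSum.IsInternal fun χ : 𝒜 → ℂ ↦ ⨅ A, (f A).eigenspace (χ A) :=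
    isInternal_iInf_eigenspace_of_commute f
      (fun A B _ ↦ (hcomm A A.2 B B.2).map toLinAlgEquiv')
      (fun A ↦ by rw [hf]; exact maxGenEigenspace_toLin'_mul_diagonal_mul_inv (hQ A A.2) _)
      (fun A ↦ by
        rw [hf]; exact iSup_eigenspace_toLin'_mul_diagonal_mul_inv_eq_top (hQ A A.2) _)
  have hreal (A : 𝒜) (μ : ℂ) (hμ : (f A).HasEigenvalue μ) : star μ = μ := by
    rw [hf, hasEigenvalue_toLin'_mul_diagonal_mul_inv_iff (hQ A A.2)] at hμ
    obtain ⟨i, rfl⟩ := hμ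
    exact Complex.conj_ofReal _
  obtain ⟨b, hbS, hbV⟩ :=
    hSh.exists_basis_pairwise_star_dotProduct_mulVec_eq_zero_of_isInternal hV
      fun χ ψ hχψ x hx y hy ↦ star_dotProduct_mulVec_eq_zero_of_mem_iInf_eigenspace hSh hSinv
        (fun A : 𝒜 ↦ hherm A A.2) hreal hχψ hx hy
  refine ⟨(Pi.basisFun ℂ _).toMatrix b, ?_,
    fun A hA ↦ isDiag_conjTranspose_mul_mul_toMatrix hbS fun j ↦ ?_⟩
  · let := (Pi.basisFun ℂ _).invertibleToMatrix b
    exact isUnit_of_invertible _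
  obtain ⟨χ, hχ⟩ := hbV j
  exact ⟨χ ⟨A, hA⟩,
    mulVec_eq_smul_mulVec_of_mem_eigenspace hSinv ((Submodule.mem_iInf _).mp hχ ⟨A, hA⟩)⟩
end

section
/- Let A ⊆ H^n be a set of Hermitian matrices whose real span contains a positive definite matrix S. Then A is SDC if and only if the set {S^{-1/2} A S^{-1/2} : A ∈ A} is a commuting family. -/
/-!
If `Pᴴ A P` is diagonal for every `A ∈ 𝒜`, then so is `D = Pᴴ S P`, since `S` lies in the real
span of `𝒜`; hence `Pᴴ (A S⁻¹ B) P = (Pᴴ A P) D⁻¹ (Pᴴ B P)` is a product of commuting diagonal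
matrices, so `A S⁻¹ B = B S⁻¹ A`, which is the commutation of `S^{-1/2} A S^{-1/2}` and
`S^{-1/2} B S^{-1/2}`. Conversely, the commuting Hermitian matrices `S^{-1/2} A S^{-1/2}` have an
orthonormal basis of joint eigenvectors, i.e. a unitary `U` diagonalizing all of them, and
`P = S^{-1/2} U` diagonalizes `𝒜` by congruence.
-/

open Matrix
open scoped ComplexOrder

noncomputable def Matrix.PosSemidef.sqrt {n : Type*} [Fintype n] [DecidableEq n]
    {A : Matrix n n ℂ} (hA : A.PosSemidef) : Matrix n n ℂ :=
  hA.1.eigenvectorUnitary.1 * diagonal ((↑) ∘ (fun x : ℝ => √x) ∘ hA.1.eigenvalues) *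
  (star hA.1.eigenvectorUnitary : Matrix n n ℂ)

namespace LinearMap.IsSymmetric

variable {𝕜 E ι κ : Type*} [RCLike 𝕜] [NormedAddCommGroup E] [InnerProductSpace 𝕜 E]
  [FiniteDimensional 𝕜 E] [Fintype κ] {T : ι → E →ₗ[𝕜] E}

theorem exists_orthonormalBasis_of_pairwise_commute (hκ : Module.finrank 𝕜 E = Fintype.card κ)
    (hT : ∀ i, (T i).IsSymmetric) (hC : Pairwise (Function.onFun Commute T)) :
    ∃ (b : OrthonormalBasis κ 𝕜 E) (μ : κ → ι → 𝕜), ∀ q i, T i (b q) = μ q i • b q := by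
  classical
  have hInt := directSum_isInternal_of_pairwise_commute hT hC
  have hOrth := orthogonalFamily_iInf_eigenspaces hT
  let b := hInt.collectedBasis fun χ => (stdOrthonormalBasis 𝕜 _).toBasis
  have hb : Orthonormal 𝕜 b :=
    hInt.collectedBasis_orthonormal hOrth fun χ => by simp
  let e := b.indexEquiv ((Module.finBasisOfFinrankEq 𝕜 E hκ).reindex (Fintype.equivFin κ).symm)
  refine ⟨(b.reindex e).toOrthonormalBasis (by simpa using hb.comp _ e.symm.injective),
    fun q => (e.symm q).1, fun q i => ?_⟩
  have hmem := hInt.collectedBasis_mem (fun χ => (stdOrthonormalBasis 𝕜 _).toBasis) (e.symm q)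
  simpa [b] using Module.End.mem_eigenspace_iff.1 ((Submodule.mem_iInf _).1 hmem i)

end LinearMap.IsSymmetric

namespace Matrix

section IsDiag

variable {n R : Type*} [Fintype n] [DecidableEq n]

theorem IsDiag.commute [CommSemiring R] {A B : Matrix n n R} (hA : A.IsDiag) (hB : B.IsDiag) :
    Commute A B := by
  rw [← hA.diagonal_diag, ← hB.diagonal_diag]
  exact commute_diagonal _ _

theorem IsDiag.mul [CommSemiring R] {A B : Matrix n n R} (hA : A.IsDiag) (hB : B.IsDiag) :
    (A * B).IsDiag := by
  rw [← hA.diagonal_diag, ← hB.diagonal_diag, diagonal_mul_diagonal]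
  exact isDiag_diagonal _

theorem IsDiag.inv [CommRing R] {A : Matrix n n R} (hA : A.IsDiag) : A⁻¹.IsDiag := by
  rw [← hA.diagonal_diag, inv_diagonal]
  exact isDiag_diagonal _

theorem mul_inv_mul_eq_of_isDiag_mul_mul [CommRing R] {Q P S A B : Matrix n n R}
    (hQ : IsUnit Q) (hP : IsUnit P) (hS : (Q * S * P).IsDiag)
    (hA : (Q * A * P).IsDiag) (hB : (Q * B * P).IsDiag) :
    A * S⁻¹ * B = B * S⁻¹ * A := by
  have : Invertible Q := hQ.invertible
  have : Invertible P := hP.invertible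
  have hconj : ∀ X Y : Matrix n n R,
      Q * (X * S⁻¹ * Y) * P = (Q * X * P) * (Q * S * P)⁻¹ * (Q * Y * P) := by
    intro X Y
    simp [Matrix.mul_inv_rev, Matrix.mul_assoc]
  apply hQ.mul_left_cancel
  apply hP.mul_right_cancel
  rw [hconj, hconj]
  calc _ = Q * B * P * (Q * A * P * (Q * S * P)⁻¹) := ((hA.mul hS.inv).commute hB).eq
    _ = _ := by rw [(hA.commute hS.inv).eq, ← Matrix.mul_assoc]

end IsDiag

theorem isDiag_mul_mul_of_mem_span {n R K : Type*} [Fintype n] [Semiring K] [Semiring R] [Module K R]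
    [SMulCommClass K R R] [IsScalarTower K R R] {Q P : Matrix n n R} {𝒜 : Set (Matrix n n R)}
    (h𝒜 : ∀ A ∈ 𝒜, (Q * A * P).IsDiag) {X : Matrix n n R} (hX : X ∈ Submodule.span K 𝒜) :
    (Q * X * P).IsDiag := by
  induction hX using Submodule.span_induction with
  | mem A hA => exact h𝒜 A hA
  | zero => simp [isDiag_zero]
  | add A B _ _ hA hB => simpa [Matrix.mul_add, Matrix.add_mul] using hA.add hB
  | smul c A _ hA => simpa using hA.smul c

section SimultaneousDiagonalization

variable {𝕜 n ι : Type*} [RCLike 𝕜] [Fintype n] [DecidableEq n]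

theorem star_mul_mul_eq_diagonal_of_mulVec_eq_smul {M : Matrix n n 𝕜}
    (b : OrthonormalBasis n 𝕜 (EuclideanSpace 𝕜 n)) {μ : n → 𝕜}
    (hM : ∀ q, M *ᵥ b q = μ q • b q) :
    star ((EuclideanSpace.basisFun n 𝕜).toBasis.toMatrix b) * M *
      (EuclideanSpace.basisFun n 𝕜).toBasis.toMatrix b = diagonal μ := by
  set U := (EuclideanSpace.basisFun n 𝕜).toBasis.toMatrix b
  have hU : star U * U = 1 :=
    (EuclideanSpace.basisFun n 𝕜).toMatrix_orthonormalBasis_mem_unitary b |>.1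
  have hMU : M * U = U * diagonal μ := by
    ext p q
    rw [mul_diagonal]
    simpa [mul_comm, U, Matrix.mulVec, dotProduct, Matrix.mul_apply, Module.Basis.toMatrix_apply]
      using congrFun (hM q) p
  rw [Matrix.mul_assoc, hMU, ← Matrix.mul_assoc, hU, Matrix.one_mul]

theorem exists_mem_unitaryGroup_forall_isDiag_of_commute {M : ι → Matrix n n 𝕜}
    (hM : ∀ i, (M i).IsHermitian) (hC : ∀ i j, Commute (M i) (M j)) :
    ∃ U ∈ unitaryGroup n 𝕜, ∀ i, (star U * M i * U).IsDiag := by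
  obtain ⟨b, μ, hb⟩ := LinearMap.IsSymmetric.exists_orthonormalBasis_of_pairwise_commute
    (T := fun i => toEuclideanLin (M i)) finrank_euclideanSpace
    (fun i => isSymmetric_toEuclideanLin_iff.2 (hM i))
    (fun i j _ => (hC i j).map (toLpLinAlgEquiv 2))
  refine ⟨_, (EuclideanSpace.basisFun n 𝕜).toMatrix_orthonormalBasis_mem_unitary b, fun i => ?_⟩
  rw [star_mul_mul_eq_diagonal_of_mulVec_eq_smul b (μ := fun q => μ q i) fun q => ?_]
  · exact isDiag_diagonal _
  · simpa using congrArg WithLp.ofLp (hb q i)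

end SimultaneousDiagonalization

namespace PosSemidef

open scoped MatrixOrder

variable {n : Type*} [Fintype n] [DecidableEq n] {A : Matrix n n ℂ}

theorem sqrt_eq_cfcSqrt (hA : A.PosSemidef) : hA.sqrt = CFC.sqrt A := by
  rw [CFC.sqrt_eq_cfc, cfc_nnreal_eq_real _ A, hA.1.cfc_eq, IsHermitian.cfc,
    Unitary.conjStarAlgAut_apply]
  -- `√x` is by definition `NNReal.sqrt x.toNNReal`
  simp only [Real.sqrt, Matrix.PosSemidef.sqrt]
  rfl

theorem isHermitian_sqrt (hA : A.PosSemidef) : hA.sqrt.IsHermitian := by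
  rw [sqrt_eq_cfcSqrt]
  exact (nonneg_iff_posSemidef.1 (CFC.sqrt_nonneg A)).isHermitian

theorem sqrt_mul_sqrt (hA : A.PosSemidef) : hA.sqrt * hA.sqrt = A := by
  rw [sqrt_eq_cfcSqrt]
  exact CFC.sqrt_mul_sqrt_self A hA.nonneg

theorem isUnit_sqrt_iff (hA : A.PosSemidef) : IsUnit hA.sqrt ↔ IsUnit A := by
  rw [sqrt_eq_cfcSqrt]
  exact CFC.isUnit_sqrt_iff A hA.nonneg

end PosSemidef

end Matrix


/-- If the real span of a set `𝒜` of Hermitian matrices contains a positive definite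
matrix `S`, then `𝒜` is SDC iff `{S^(-1/2) A S^(-1/2) : A ∈ 𝒜}` is a commuting family. -/
theorem sdc_iff_commuting_of_posDef
    {n : ℕ} (𝒜 : Set (Matrix (Fin n) (Fin n) ℂ))
    (hherm : ∀ A ∈ 𝒜, A.IsHermitian)
    (S : Matrix (Fin n) (Fin n) ℂ) (hSmem : S ∈ Submodule.span ℝ 𝒜) (hS : S.PosDef) :
    (∃ P : Matrix (Fin n) (Fin n) ℂ, IsUnit P ∧ ∀ A ∈ 𝒜, (Pᴴ * A * P).IsDiag) ↔
    (∀ A ∈ 𝒜, ∀ B ∈ 𝒜,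
      Commute ((Matrix.PosSemidef.sqrt hS.posSemidef)⁻¹ * A * (Matrix.PosSemidef.sqrt hS.posSemidef)⁻¹)
        ((Matrix.PosSemidef.sqrt hS.posSemidef)⁻¹ * B * (Matrix.PosSemidef.sqrt hS.posSemidef)⁻¹)) := by
  set R := (Matrix.PosSemidef.sqrt hS.posSemidef)⁻¹
  have hR : R.IsHermitian := (PosSemidef.isHermitian_sqrt _).inv
  have hRR : R * R = S⁻¹ := by rw [← Matrix.mul_inv_rev, PosSemidef.sqrt_mul_sqrt]
  constructor
  · rintro ⟨P, hP, hdiag⟩ A hA B hB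
    have key : A * S⁻¹ * B = B * S⁻¹ * A :=
      mul_inv_mul_eq_of_isDiag_mul_mul ((isUnit_conjTranspose P).2 hP) hP
        (isDiag_mul_mul_of_mem_span hdiag hSmem) (hdiag A hA) (hdiag B hB)
    calc R * A * R * (R * B * R) = R * (A * (R * R) * B) * R := by simp only [Matrix.mul_assoc]
      _ = R * (B * (R * R) * A) * R := by rw [hRR, key]
      _ = R * B * R * (R * A * R) := by simp only [Matrix.mul_assoc]
  · intro hcomm
    obtain ⟨U, hU, hdiag⟩ := exists_mem_unitaryGroup_forall_isDiag_of_commute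
      (M := fun A : 𝒜 => R * (A : Matrix (Fin n) (Fin n) ℂ) * R)
      (fun A => by simpa [hR.eq] using isHermitian_conjTranspose_mul_mul R (hherm A A.2))
      (fun A B => hcomm A A.2 B B.2)
    have hRunit : IsUnit R :=
      (isUnit_nonsing_inv_iff.2 ((PosSemidef.isUnit_sqrt_iff _).2 hS.isUnit))
    refine ⟨R * U, hRunit.mul ((Unitary.toUnits ⟨U, hU⟩).isUnit), fun A hA => ?_⟩
    have hcongr : (R * U)ᴴ * A * (R * U) = star U * (R * A * R) * U := by
      rw [conjTranspose_mul, hR.eq]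
      simp only [star_eq_conjTranspose, Matrix.mul_assoc]
    rw [hcongr]
    exact hdiag ⟨A, hA⟩
end

section
/- Let A, B ∈ H^n with A invertible, and suppose the set {A, B} is ASDC, i.e., there exist sequences Ã_j → A, B̃_j → B of Hermitian matrices with each pair {Ã_j, B̃_j} SDC. Then A⁻¹B has only real eigenvalues. -/
open Matrix Filter
open scoped Matrix.Norms.L2Operator

/-!
If `Pᴴ A P` and `Pᴴ B P` are diagonal with real entries `aᵢ, bᵢ`, then `μ • A - B` is congruent
to the diagonal matrix with entries `μ aᵢ - bᵢ`, and `|Im μ| |aᵢ| ≤ |μ aᵢ - bᵢ|`. Cancelling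
`|det P|²` gives `|Im μ|ⁿ |det A| ≤ |det (μ A - B)|` for every SDC Hermitian pair. Both sides are
continuous in `(A, B)`, so the inequality survives the limit, which replaces the continuity of
eigenvalues. For an eigenvalue `μ` of `A⁻¹ B` the right side vanishes, and `det A ≠ 0` forces
`Im μ = 0`.
-/

theorem Complex.abs_im_mul_abs_le_norm_mul_sub (μ : ℂ) (a b : ℝ) :
    |μ.im| * |a| ≤ ‖μ * a - b‖ := by
  have him : (μ * a - b).im = μ.im * a := by simp
  rw [← abs_mul, ← him]
  exact Complex.abs_im_le_norm _

namespace Matrix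

variable {n : Type*} [Fintype n] [DecidableEq n]

theorem det_smul_sub_eq_zero_of_mem_spectrum_inv_mul {K : Type*} [Field K]
    {A B : Matrix n n K} (hA : IsUnit A) {μ : K} (hμ : μ ∈ spectrum K (A⁻¹ * B)) :
    (μ • A - B).det = 0 := by
  have hfac : μ • A - B = A * (algebraMap K _ μ - A⁻¹ * B) := by
    rw [Matrix.mul_sub, Algebra.algebraMap_eq_smul_one, Matrix.mul_smul, Matrix.mul_one,
      Matrix.mul_nonsing_inv_cancel_left _ _ ((isUnit_iff_isUnit_det A).mp hA)]
  rw [spectrum.mem_iff, isUnit_iff_isUnit_det, isUnit_iff_ne_zero, not_not] at hμ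
  rw [hfac, det_mul, hμ, mul_zero]

theorem norm_det_conjTranspose_mul_mul {𝕜 : Type*} [RCLike 𝕜] (P X : Matrix n n 𝕜) :
    ‖(Pᴴ * X * P).det‖ = ‖P.det‖ ^ 2 * ‖X.det‖ := by
  simp only [det_mul, det_conjTranspose, norm_mul, norm_star]
  ring

theorem IsDiag.abs_im_pow_mul_norm_det_le {D E : Matrix n n ℂ} (hD : D.IsDiag) (hE : E.IsDiag)
    (hDh : D.IsHermitian) (hEh : E.IsHermitian) (μ : ℂ) :
    |μ.im| ^ Fintype.card n * ‖D.det‖ ≤ ‖(μ • D - E).det‖ := by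
  rw [← hD.diagonal_diag, ← hE.diagonal_diag, ← diagonal_smul, diagonal_sub, det_diagonal,
    det_diagonal, norm_prod, norm_prod, ← Finset.card_univ, ← Finset.prod_const,
    ← Finset.prod_mul_distrib]
  refine Finset.prod_le_prod (fun i _ => by positivity) fun i _ => ?_
  have hDi : ((D i i).re : ℂ) = D i i := hDh.coe_re_apply_self i
  have hEi : ((E i i).re : ℂ) = E i i := hEh.coe_re_apply_self i
  simp only [diag_apply, Pi.smul_apply, smul_eq_mul]
  rw [← hDi, ← hEi, Complex.norm_real, Real.norm_eq_abs]
  exact Complex.abs_im_mul_abs_le_norm_mul_sub μ _ _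

theorem abs_im_pow_mul_norm_det_le_of_congr_diag {A B P : Matrix n n ℂ}
    (hA : A.IsHermitian) (hB : B.IsHermitian) (hP : IsUnit P)
    (hPA : (Pᴴ * A * P).IsDiag) (hPB : (Pᴴ * B * P).IsDiag) (μ : ℂ) :
    |μ.im| ^ Fintype.card n * ‖A.det‖ ≤ ‖(μ • A - B).det‖ := by
  have hcongr : μ • (Pᴴ * A * P) - Pᴴ * B * P = Pᴴ * (μ • A - B) * P := by
    rw [Matrix.mul_sub, Matrix.sub_mul, Matrix.mul_smul, Matrix.smul_mul]
  have hdiag := hPA.abs_im_pow_mul_norm_det_le hPB (isHermitian_conjTranspose_mul_mul P hA)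
    (isHermitian_conjTranspose_mul_mul P hB) μ
  rw [hcongr, norm_det_conjTranspose_mul_mul, norm_det_conjTranspose_mul_mul,
    mul_left_comm] at hdiag
  have hPdet : 0 < ‖P.det‖ ^ 2 :=
    pow_pos (norm_pos_iff.mpr ((isUnit_iff_isUnit_det P).mp hP).ne_zero) 2
  exact le_of_mul_le_mul_left hdiag hPdet

end Matrix

theorem asdc_pair_imp_real_eigenvalues_general
    {n : ℕ} (A B : Matrix (Fin n) (Fin n) ℂ)
    (hAinv : IsUnit A)
    (At Bt : ℕ → Matrix (Fin n) (Fin n) ℂ)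
    (hAtherm : ∀ j, (At j).IsHermitian) (hBtherm : ∀ j, (Bt j).IsHermitian)
    (hAt : Tendsto At atTop (nhds A)) (hBt : Tendsto Bt atTop (nhds B))
    (hSDC : ∀ j, ∃ P : Matrix (Fin n) (Fin n) ℂ, IsUnit P ∧
      (Pᴴ * At j * P).IsDiag ∧ (Pᴴ * Bt j * P).IsDiag) :
    ∀ μ ∈ spectrum ℂ (A⁻¹ * B), μ.im = 0 := by
  intro μ hμ
  have hcont : Continuous fun M : Matrix (Fin n) (Fin n) ℂ => ‖M.det‖ :=
    continuous_id.matrix_det.norm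
  have hle : |μ.im| ^ Fintype.card (Fin n) * ‖A.det‖ ≤ ‖(μ • A - B).det‖ := by
    refine le_of_tendsto_of_tendsto' (((hcont.tendsto A).comp hAt).const_mul _)
      ((hcont.tendsto _).comp ((hAt.const_smul μ).sub hBt)) fun j => ?_
    obtain ⟨P, hP, hPA, hPB⟩ := hSDC j
    exact abs_im_pow_mul_norm_det_le_of_congr_diag (hAtherm j) (hBtherm j) hP hPA hPB μ
  rw [det_smul_sub_eq_zero_of_mem_spectrum_inv_mul hAinv hμ, norm_zero] at hle
  have hAdet : 0 < ‖A.det‖ := norm_pos_iff.mpr ((isUnit_iff_isUnit_det A).mp hAinv).ne_zero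
  have hpow : |μ.im| ^ Fintype.card (Fin n) = 0 :=
    le_antisymm (nonpos_of_mul_nonpos_left hle hAdet) (by positivity)
  exact abs_eq_zero.mp (pow_eq_zero_iff'.mp hpow).1

/-- If `A` is invertible Hermitian, `B` is Hermitian, and `{A, B}` is ASDC (a limit of
SDC Hermitian pairs), then `A⁻¹ * B` has only real eigenvalues. -/
theorem asdc_pair_imp_real_eigenvalues
    {n : ℕ} (A B : Matrix (Fin n) (Fin n) ℂ)
    (hA : A.IsHermitian) (hB : B.IsHermitian) (hAinv : IsUnit A)
    (At Bt : ℕ → Matrix (Fin n) (Fin n) ℂ)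
    (hAtherm : ∀ j, (At j).IsHermitian) (hBtherm : ∀ j, (Bt j).IsHermitian)
    (hAt : Tendsto At atTop (nhds A)) (hBt : Tendsto Bt atTop (nhds B))
    (hSDC : ∀ j, ∃ P : Matrix (Fin n) (Fin n) ℂ, IsUnit P ∧
      (Pᴴ * At j * P).IsDiag ∧ (Pᴴ * Bt j * P).IsDiag) :
    ∀ μ ∈ spectrum ℂ (A⁻¹ * B), μ.im = 0 :=
  asdc_pair_imp_real_eigenvalues_general A B hAinv At Bt hAtherm hBtherm hAt hBt hSDC
end

section
/- Let T ∈ C^{n×n} be a block matrix with respect to a partition (n_1,...,n_k) of n, such that each block T_{i,j} is upper triangular Toeplitz. Then the characteristic polynomial of T depends only on the leading (main-diagonal) entries t^{(1)}_{i,j} of those blocks T_{i,j} with n_i = n_j. Equivalently, if two such matrices T and T' satisfy t^{(1)}_{i,j} = (t')^{(1)}_{i,j} for all i,j with n_i = n_j, then T and T' have the same characteristic polynomial. -/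
open Matrix

/-- A rectangular `p × q` matrix is upper triangular Toeplitz (top-right aligned when
`p ≤ q`, top-left aligned when `q ≤ p`). -/
def IsUpperTriToeplitz {p q : ℕ} (M : Matrix (Fin p) (Fin q) ℂ) : Prop :=
  ∃ t : ℤ → ℂ, ∀ (a : Fin p) (b : Fin q),
    M a b = if max 0 ((q : ℤ) - (p : ℤ)) ≤ (b : ℤ) - (a : ℤ) then t ((b : ℤ) - (a : ℤ)) else 0

/-!
Index the entry `a` of block `i` by the weight `(a - n i, n i)`, ordered lexicographically.
An upper triangular Toeplitz block `T_{i,j}` vanishes wherever the column weight is below the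
row weight, so `T` is block triangular for this weight and `χ_T` is the product of the
characteristic polynomials of its diagonal weight blocks. Two indices of equal weight lie in
blocks of equal size at the same position, so every entry of a weight block sits on the main
diagonal of a square block `T_{i,j}` and equals its leading entry `t^{(1)}_{i,j}`.
-/

theorem Matrix.BlockTriangular.charpoly_congr {m α R : Type*} [Fintype m] [DecidableEq m]
    [CommRing R] [LinearOrder α] {M N : Matrix m m R} {b : m → α}
    (hM : M.BlockTriangular b) (hN : N.BlockTriangular b)
    (h : ∀ x y, b x = b y → M x y = N x y) : M.charpoly = N.charpoly := by
  rw [hM.charpoly, hN.charpoly]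
  refine Finset.prod_congr rfl fun a _ => congrArg Matrix.charpoly ?_
  ext x y
  exact h x y (x.2.trans y.2.symm)

namespace IsUpperTriToeplitz

variable {p q : ℕ} {M : Matrix (Fin p) (Fin q) ℂ}

theorem apply_eq_zero (hM : IsUpperTriToeplitz M) {a : Fin p} {b : Fin q}
    (h : (b : ℤ) - a < max 0 ((q : ℤ) - p)) : M a b = 0 := by
  obtain ⟨t, ht⟩ := hM
  rw [ht, if_neg h.not_ge]

theorem apply_eq_of_sub_eq (hM : IsUpperTriToeplitz M) {a a' : Fin p} {b b' : Fin q}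
    (h : (b : ℤ) - a = (b' : ℤ) - a') : M a b = M a' b' := by
  obtain ⟨t, ht⟩ := hM
  rw [ht, ht, h]

end IsUpperTriToeplitz

section BlockToeplitz

variable {k : ℕ} {n : Fin k → ℕ}

def blockToeplitzWeight (n : Fin k → ℕ) (x : (i : Fin k) × Fin (n i)) : Lex (ℤ × ℤ) :=
  toLex ((x.2 : ℤ) - n x.1, n x.1)

theorem blockToeplitzWeight_eq_iff {i j : Fin k} {a : Fin (n i)} {b : Fin (n j)} :
    blockToeplitzWeight n ⟨i, a⟩ = blockToeplitzWeight n ⟨j, b⟩ ↔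
      n i = n j ∧ (a : ℕ) = b := by
  simp only [blockToeplitzWeight, toLex_inj, Prod.mk.injEq]
  omega

theorem blockTriangular_blockToeplitzWeight
    {T : Matrix ((i : Fin k) × Fin (n i)) ((i : Fin k) × Fin (n i)) ℂ}
    (hT : ∀ i j : Fin k, IsUpperTriToeplitz
      (Matrix.of fun (a : Fin (n i)) (b : Fin (n j)) => T ⟨i, a⟩ ⟨j, b⟩)) :
    T.BlockTriangular (blockToeplitzWeight n) := by
  rintro ⟨i, a⟩ ⟨j, b⟩ hlt
  refine (hT i j).apply_eq_zero ?_
  simp only [blockToeplitzWeight, Prod.Lex.toLex_lt_toLex] at hlt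
  omega

end BlockToeplitz

/-- The characteristic polynomial of a block matrix with upper triangular Toeplitz blocks
depends only on the leading (main-diagonal) entries of the blocks `T_{i,j}` with
`n i = n j`: two such matrices agreeing on those entries have equal characteristic
polynomials. -/
theorem charpoly_eq_of_blockToeplitz_leading_entries_eq
    {k : ℕ} (n : Fin k → ℕ) (hn : ∀ i, 0 < n i)
    (T T' : Matrix ((i : Fin k) × Fin (n i)) ((i : Fin k) × Fin (n i)) ℂ)
    (hT : ∀ i j : Fin k, IsUpperTriToeplitz
      (Matrix.of fun (a : Fin (n i)) (b : Fin (n j)) => T ⟨i, a⟩ ⟨j, b⟩))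
    (hT' : ∀ i j : Fin k, IsUpperTriToeplitz
      (Matrix.of fun (a : Fin (n i)) (b : Fin (n j)) => T' ⟨i, a⟩ ⟨j, b⟩))
    (hlead : ∀ i j : Fin k, n i = n j →
      T ⟨i, ⟨0, hn i⟩⟩ ⟨j, ⟨0, hn j⟩⟩ = T' ⟨i, ⟨0, hn i⟩⟩ ⟨j, ⟨0, hn j⟩⟩) :
    T.charpoly = T'.charpoly := by
  refine (blockTriangular_blockToeplitzWeight hT).charpoly_congr
    (blockTriangular_blockToeplitzWeight hT') ?_
  rintro ⟨i, a⟩ ⟨j, b⟩ hw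
  obtain ⟨hnij, hab⟩ := blockToeplitzWeight_eq_iff.mp hw
  have hdiag : ((b : ℕ) : ℤ) - (a : ℕ) = ((0 : ℕ) : ℤ) - (0 : ℕ) := by omega
  calc T ⟨i, a⟩ ⟨j, b⟩ = T ⟨i, ⟨0, hn i⟩⟩ ⟨j, ⟨0, hn j⟩⟩ := (hT i j).apply_eq_of_sub_eq hdiag
    _ = T' ⟨i, ⟨0, hn i⟩⟩ ⟨j, ⟨0, hn j⟩⟩ := hlead i j hnij
    _ = T' ⟨i, a⟩ ⟨j, b⟩ := ((hT' i j).apply_eq_of_sub_eq hdiag).symm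
end

section
/- Let A = {A_1,...,A_m} ⊆ H^n with A_1 invertible. If A is SDC, then the real (unital) algebra generated by the set {A_1⁻¹ A_i : i ∈ [m]} has real dimension at most n. -/
open Matrix

/-- Conjugation `X ↦ P⁻¹ * X * P` by an invertible matrix, as an `ℝ`-algebra hom. -/
noncomputable def conjAlgHom {n : ℕ} (P : Matrix (Fin n) (Fin n) ℂ) (hP : IsUnit P) :
    Matrix (Fin n) (Fin n) ℂ →ₐ[ℝ] Matrix (Fin n) (Fin n) ℂ where
  toFun X := P⁻¹ * X * P
  map_one' := by
    simp [Matrix.nonsing_inv_mul P ((Matrix.isUnit_iff_isUnit_det P).mp hP)]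
  map_mul' X Y := by
    have h : P * P⁻¹ = 1 := Matrix.mul_nonsing_inv P ((Matrix.isUnit_iff_isUnit_det P).mp hP)
    calc P⁻¹ * (X * Y) * P = (P⁻¹ * X) * (P * P⁻¹) * (Y * P) := by rw [h]; noncomm_ring
      _ = (P⁻¹ * X * P) * (P⁻¹ * Y * P) := by noncomm_ring
  map_zero' := by simp
  map_add' X Y := by noncomm_ring
  commutes' r := by
    have h : P⁻¹ * P = 1 := Matrix.nonsing_inv_mul P ((Matrix.isUnit_iff_isUnit_det P).mp hP)
    simp [Algebra.algebraMap_eq_smul_one, Matrix.smul_mul, Matrix.mul_smul, h]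

lemma conjAlgHom_injective {n : ℕ} (P : Matrix (Fin n) (Fin n) ℂ) (hP : IsUnit P) :
    Function.Injective (conjAlgHom P hP) := by
  intro X Y h
  have h1 : P * P⁻¹ = 1 := Matrix.mul_nonsing_inv P ((Matrix.isUnit_iff_isUnit_det P).mp hP)
  have e : ∀ Z : Matrix (Fin n) (Fin n) ℂ, P * (P⁻¹ * Z * P) * P⁻¹ = Z := by
    intro Z
    calc P * (P⁻¹ * Z * P) * P⁻¹ = (P * P⁻¹) * Z * (P * P⁻¹) := by noncomm_ring
      _ = Z := by rw [h1]; noncomm_ring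
  have h' : P⁻¹ * X * P = P⁻¹ * Y * P := h
  calc X = P * (P⁻¹ * X * P) * P⁻¹ := (e X).symm
    _ = P * (P⁻¹ * Y * P) * P⁻¹ := by rw [h']
    _ = Y := e Y

/-- The `ℝ`-algebra hom sending a real vector to the complex diagonal matrix. -/
noncomputable def realDiagAlgHom (n : ℕ) : (Fin n → ℝ) →ₐ[ℝ] Matrix (Fin n) (Fin n) ℂ :=
  (Matrix.diagonalAlgHom ℝ).comp
    (Pi.algHom ℝ (fun _ : Fin n => ℂ)
      (fun i => (Algebra.ofId ℝ ℂ).comp (Pi.evalAlgHom ℝ (fun _ => ℝ) i)))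

lemma realDiagAlgHom_apply {n : ℕ} (v : Fin n → ℝ) :
    realDiagAlgHom n v = Matrix.diagonal (fun i => (v i : ℂ)) := rfl

/-- If `{A_1, ..., A_m}` is an SDC set of Hermitian matrices with `A_1` invertible, then
the real unital algebra generated by `{A_1⁻¹ * A_i}` has real dimension at most `n`. -/
theorem sdc_imp_real_algebra_dim_le
    {n m : ℕ} (A : Fin (m + 1) → Matrix (Fin n) (Fin n) ℂ)
    (hherm : ∀ i, (A i).IsHermitian) (hA1 : IsUnit (A 0))
    (P : Matrix (Fin n) (Fin n) ℂ) (hP : IsUnit P)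
    (hdiag : ∀ i, (Pᴴ * A i * P).IsDiag) :
    Module.finrank ℝ
      (Algebra.adjoin ℝ (Set.range fun i => (A 0)⁻¹ * A i)) ≤ n := by
  classical
  set S : Set (Matrix (Fin n) (Fin n) ℂ) := Set.range fun i => (A 0)⁻¹ * A i with hS
  set c := conjAlgHom P hP with hc
  set g := realDiagAlgHom n with hg
  set D : Fin (m + 1) → Matrix (Fin n) (Fin n) ℂ := fun i => Pᴴ * A i * P with hD
  have hDherm : ∀ i, (D i).IsHermitian := by
    intro i
    simp only [hD, Matrix.IsHermitian, Matrix.conjTranspose_mul, Matrix.conjTranspose_conjTranspose,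
      (hherm i).eq, Matrix.mul_assoc]
  have hDreal : ∀ i k, D i k k = (((D i k k).re : ℝ) : ℂ) := by
    intro i k
    have := congrFun (congrFun (hDherm i) k) k
    simp only [Matrix.conjTranspose_apply] at this
    exact ((Complex.conj_eq_iff_re).mp this).symm
  have hDdiag : ∀ i, D i = Matrix.diagonal (fun k => (((D i k k).re : ℝ) : ℂ)) := by
    intro i
    ext k l
    by_cases hkl : k = l
    · subst hkl; simp [Matrix.diagonal_apply_eq, ← hDreal i k]
    · rw [Matrix.diagonal_apply_ne _ hkl]
      exact hdiag i hkl
  have hPH : IsUnit Pᴴ := by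
    rw [Matrix.isUnit_iff_isUnit_det] at hP ⊢
    simpa [Matrix.det_conjTranspose] using hP.star
  have hPdet : IsUnit P.det := (Matrix.isUnit_iff_isUnit_det P).mp hP
  have hPHdet : IsUnit Pᴴ.det := (Matrix.isUnit_iff_isUnit_det _).mp hPH
  have hD0unit : IsUnit (D 0).det := by
    rw [hD]
    simp only [Matrix.det_mul]
    exact (hPHdet.mul ((Matrix.isUnit_iff_isUnit_det _).mp hA1)).mul hPdet
  obtain ⟨d, hd⟩ : ∃ d : Fin (m + 1) → Fin n → ℝ,
      ∀ i, D i = Matrix.diagonal (fun k => ((d i k : ℝ) : ℂ)) :=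
    ⟨fun i k => (D i k k).re, hDdiag⟩
  have hv : ∀ k, ((d 0 k : ℝ) : ℂ) ≠ 0 := by
    intro k
    have hdet := hD0unit
    rw [hd 0, Matrix.det_diagonal, isUnit_iff_ne_zero, Finset.prod_ne_zero_iff] at hdet
    exact hdet k (Finset.mem_univ k)
  have hinv : (D 0)⁻¹ = Matrix.diagonal (fun k => (((d 0 k : ℝ) : ℂ))⁻¹) := by
    apply Matrix.inv_eq_right_inv
    rw [hd 0, Matrix.diagonal_mul_diagonal]
    have : (fun k => ((d 0 k : ℝ) : ℂ) * (((d 0 k : ℝ) : ℂ))⁻¹) =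
        fun _ => (1 : ℂ) := funext fun k => mul_inv_cancel₀ (hv k)
    rw [this, Matrix.diagonal_one]
  have key : ∀ i : Fin (m + 1), c ((A 0)⁻¹ * A i) ∈ g.range := by
    intro i
    have hcalc : c ((A 0)⁻¹ * A i) = (D 0)⁻¹ * D i := by
      have h1 : (D 0)⁻¹ = P⁻¹ * (A 0)⁻¹ * (Pᴴ)⁻¹ := by
        rw [hD]
        rw [Matrix.mul_inv_rev, Matrix.mul_inv_rev]
        noncomm_ring
      have h2 : (Pᴴ)⁻¹ * Pᴴ = 1 := Matrix.nonsing_inv_mul _ hPHdet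
      show P⁻¹ * ((A 0)⁻¹ * A i) * P = (D 0)⁻¹ * D i
      rw [h1, hD]
      calc P⁻¹ * ((A 0)⁻¹ * A i) * P
          = P⁻¹ * (A 0)⁻¹ * ((Pᴴ)⁻¹ * Pᴴ) * (A i * P) := by rw [h2]; noncomm_ring
        _ = P⁻¹ * (A 0)⁻¹ * (Pᴴ)⁻¹ * (Pᴴ * A i * P) := by noncomm_ring
    rw [hcalc]
    refine ⟨(fun k => (d 0 k)⁻¹) * (fun k => d i k), ?_⟩
    show g ((fun k => (d 0 k)⁻¹) * (fun k => d i k)) = (D 0)⁻¹ * D i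
    rw [hg, realDiagAlgHom_apply, hinv, hd i, Matrix.diagonal_mul_diagonal]
    funext k
    simp only [Pi.mul_apply]
    push_cast
    ring
  have hmap : (Algebra.adjoin ℝ S).map c ≤ g.range := by
    rw [AlgHom.map_adjoin]
    refine Algebra.adjoin_le ?_
    rintro x ⟨y, ⟨i, rfl⟩, rfl⟩
    exact key i
  have hfr : Module.finrank ℝ (Algebra.adjoin ℝ S) =
      Module.finrank ℝ ((Algebra.adjoin ℝ S).map c) :=
    (Subalgebra.equivMapOfInjective _ c (conjAlgHom_injective P hP)).toLinearEquiv.finrank_eq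
  rw [hfr]
  have hsub : Subalgebra.toSubmodule ((Algebra.adjoin ℝ S).map c) ≤
      LinearMap.range g.toLinearMap := by
    intro x hx
    obtain ⟨y, hy⟩ := hmap hx
    exact ⟨y, hy⟩
  calc Module.finrank ℝ ((Algebra.adjoin ℝ S).map c)
      ≤ Module.finrank ℝ (LinearMap.range g.toLinearMap) := Submodule.finrank_mono hsub
    _ ≤ Module.finrank ℝ (Fin n → ℝ) := LinearMap.finrank_range_le _
    _ = n := by simp
end

section
/- Let A = {A_1,...,A_m} ⊆ H^n with A_1 invertible. If A is ASDC, then the real algebra generated by {A_1⁻¹ A_i : i ∈ [m]} has real dimension at most n. -/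
/-!
A simultaneous congruence diagonalisation `Pᴴ Aᵢ P = Dᵢ` of Hermitian matrices has real
diagonal `Dᵢ` and gives `A₁⁻¹ Aᵢ = P (D₁⁻¹ Dᵢ) P⁻¹`, so for an SDC family the algebra lies in a
conjugate of the real diagonal matrices, of dimension `n`. For an ASDC family the bound passes
to the limit because the dimension of the algebra generated by a family is lower semicontinuous
in the family: finitely many independent words in the generators stay independent under small
perturbations.
-/

open Matrix
open scoped Matrix.Norms.L2Operator
open Module Set Filter Topology

section Semicontinuity

variable {𝕜 E : Type*} [NontriviallyNormedField 𝕜] [CompleteSpace 𝕜]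
  [NormedAddCommGroup E] [NormedSpace 𝕜 E] [FiniteDimensional 𝕜 E]

theorem lowerSemicontinuous_finrank_span_range {ι : Type*} :
    LowerSemicontinuous fun v : ι → E => finrank 𝕜 (Submodule.span 𝕜 (range v)) := by
  intro v k hk
  obtain ⟨f, hf⟩ := exists_linearIndependent_of_le_finrank (Order.add_one_le_of_lt hk)
  choose c hc using fun j => Finsupp.mem_span_range_iff_exists_finsupp.mp (f j).2
  let combine : (ι → E) → Fin (k + 1) → E := fun w j => (c j).sum fun i a => a • w i
  have hcont : Continuous combine := continuous_pi fun j =>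
    continuous_finsetSum _ fun i _ => (continuous_apply i).const_smul _
  have hv : LinearIndependent 𝕜 (combine v) := by
    rw [show combine v = fun j => (f j : E) from funext hc]
    exact hf.map' (Submodule.subtype _) (Submodule.ker_subtype _)
  filter_upwards [hcont.continuousAt.eventually hv.eventually] with w hw
  calc k < Fintype.card (Fin (k + 1)) := by simp
    _ = finrank 𝕜 (Submodule.span 𝕜 (range (combine w))) := (finrank_span_eq_card hw).symm
    _ ≤ finrank 𝕜 (Submodule.span 𝕜 (range w)) := by
      refine Submodule.finrank_mono (Submodule.span_le.mpr ?_)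
      rintro _ ⟨j, rfl⟩
      exact Finsupp.mem_span_range_iff_exists_finsupp.mpr ⟨c j, rfl⟩

theorem finrank_adjoin_range_eq_finrank_span_freeMonoidLift {R A ι : Type*} [CommSemiring R]
    [Semiring A] [Algebra R A] (g : ι → A) :
    finrank R (Algebra.adjoin R (range g)) =
      finrank R (Submodule.span R (range fun w : FreeMonoid ι => FreeMonoid.lift g w)) := by
  rw [← Subalgebra.finrank_toSubmodule, Algebra.adjoin_eq_span, ← FreeMonoid.mrange_lift,
    MonoidHom.coe_mrange]

theorem continuous_freeMonoidLift {ι M : Type*} [Monoid M] [TopologicalSpace M]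
    [ContinuousMul M] : Continuous fun (g : ι → M) (w : FreeMonoid ι) => FreeMonoid.lift g w :=
  continuous_pi fun w => by
    simpa only [FreeMonoid.lift_apply] using
      continuous_list_prod w.toList fun i _ => continuous_apply i

theorem lowerSemicontinuous_finrank_adjoin_range {A ι : Type*} [NormedRing A]
    [NormedAlgebra 𝕜 A] [FiniteDimensional 𝕜 A] :
    LowerSemicontinuous fun g : ι → A => finrank 𝕜 (Algebra.adjoin 𝕜 (range g)) := by
  simp_rw [finrank_adjoin_range_eq_finrank_span_freeMonoidLift]
  exact fun g => (lowerSemicontinuous_finrank_span_range _).comp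
    continuous_freeMonoidLift.continuousAt

end Semicontinuity

section RealDiagonal

theorem Matrix.IsDiag.exists_eq_diagonal_ofReal {ι : Type*} [DecidableEq ι] {C : Matrix ι ι ℂ}
    (hd : C.IsDiag) (hC : C.IsHermitian) : ∃ d : ι → ℝ, C = diagonal fun k => (d k : ℂ) :=
  ⟨fun k => (C k k).re, by
    conv_lhs => rw [← hd.diagonal_diag, ← hC.coe_re_diag]
    rfl⟩

variable {ι : Type*} [Fintype ι] [DecidableEq ι]

noncomputable def Matrix.conjRealDiagonal (P : (Matrix ι ι ℂ)ˣ) :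
    (ι → ℝ) →ₐ[ℝ] Matrix ι ι ℂ :=
  (MulSemiringAction.toAlgEquiv ℝ (Matrix ι ι ℂ) (ConjAct.toConjAct P)).toAlgHom.comp
    ((diagonalAlgHom ℝ).comp (AlgHom.compLeft Complex.ofRealAm ι))

theorem Matrix.conjRealDiagonal_apply (P : (Matrix ι ι ℂ)ˣ) (d : ι → ℝ) :
    conjRealDiagonal P d = P * diagonal (fun k => (d k : ℂ)) * (P : Matrix ι ι ℂ)⁻¹ := by
  rw [← coe_units_inv]
  rfl

theorem Matrix.finrank_range_conjRealDiagonal_le (P : (Matrix ι ι ℂ)ˣ) :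
    finrank ℝ (conjRealDiagonal P).range ≤ Fintype.card ι := by
  rw [← Subalgebra.finrank_toSubmodule, ← finrank_fintype_fun_eq_card ℝ]
  exact LinearMap.finrank_range_le (conjRealDiagonal P).toLinearMap

theorem Matrix.inv_mul_mem_range_conjRealDiagonal {C₀ C : Matrix ι ι ℂ}
    (h₀ : C₀.IsHermitian) (h : C.IsHermitian) (hC₀ : IsUnit C₀) (P : (Matrix ι ι ℂ)ˣ)
    (hd₀ : ((P : Matrix ι ι ℂ)ᴴ * C₀ * P).IsDiag)
    (hd : ((P : Matrix ι ι ℂ)ᴴ * C * P).IsDiag) :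
    C₀⁻¹ * C ∈ (conjRealDiagonal P).range := by
  obtain ⟨d₀, hD₀⟩ := hd₀.exists_eq_diagonal_ofReal (isHermitian_conjTranspose_mul_mul _ h₀)
  obtain ⟨d, hD⟩ := hd.exists_eq_diagonal_ofReal (isHermitian_conjTranspose_mul_mul _ h)
  have hunit : IsUnit (diagonal fun k => (d₀ k : ℂ)) :=
    hD₀ ▸ ((P.isUnit.star).mul hC₀).mul P.isUnit
  have hne : ∀ k, d₀ k ≠ 0 := fun k => by
    simpa using (Pi.isUnit_iff.mp (isUnit_diagonal.mp hunit) k).ne_zero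
  have hdiv : (diagonal fun k => (d₀ k : ℂ)) * diagonal (fun k => ((d / d₀) k : ℂ)) =
      diagonal fun k => (d k : ℂ) := by
    rw [diagonal_mul_diagonal]
    congr 1; funext k
    simp [mul_div_cancel₀ _ (Complex.ofReal_ne_zero.mpr (hne k))]
  have hPdet : IsUnit (P : Matrix ι ι ℂ).det := (isUnit_iff_isUnit_det _).mp P.isUnit
  have hPHdet : IsUnit (P : Matrix ι ι ℂ)ᴴ.det := by
    rw [det_conjTranspose]
    exact hPdet.star
  refine ⟨d / d₀, ?_⟩
  calc conjRealDiagonal P (d / d₀)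
      = P * ((diagonal fun k => (d₀ k : ℂ))⁻¹ * diagonal fun k => (d k : ℂ)) *
          (P : Matrix ι ι ℂ)⁻¹ := by
        rw [conjRealDiagonal_apply, ← hdiv,
          nonsing_inv_mul_cancel_left _ _ ((isUnit_iff_isUnit_det _).mp hunit)]
    _ = P * ((P : Matrix ι ι ℂ)⁻¹ * (C₀⁻¹ * C) * P) * (P : Matrix ι ι ℂ)⁻¹ := by
        rw [← hD₀, ← hD, Matrix.mul_inv_rev, Matrix.mul_inv_rev]
        simp only [Matrix.mul_assoc, nonsing_inv_mul_cancel_left _ _ hPHdet]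
    _ = C₀⁻¹ * C := by
        simp only [Matrix.mul_assoc, mul_nonsing_inv_cancel_left _ _ hPdet,
          mul_nonsing_inv _ hPdet, Matrix.mul_one]

theorem Matrix.finrank_adjoin_range_inv_mul_le_card {κ : Type*} {C : κ → Matrix ι ι ℂ}
    (hC : ∀ k, (C k).IsHermitian) {k₀ : κ} (hk₀ : IsUnit (C k₀)) {P : Matrix ι ι ℂ}
    (hP : IsUnit P) (hdiag : ∀ k, (Pᴴ * C k * P).IsDiag) :
    finrank ℝ (Algebra.adjoin ℝ (range fun k => (C k₀)⁻¹ * C k)) ≤ Fintype.card ι := by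
  lift P to (Matrix ι ι ℂ)ˣ using hP
  have hle : Algebra.adjoin ℝ (range fun k => (C k₀)⁻¹ * C k) ≤ (conjRealDiagonal P).range :=
    Algebra.adjoin_le <| range_subset_iff.mpr fun k =>
      inv_mul_mem_range_conjRealDiagonal (hC k₀) (hC k) hk₀ P (hdiag k₀) (hdiag k)
  rw [← Subalgebra.finrank_toSubmodule]
  exact (Submodule.finrank_mono hle).trans <|
    (Subalgebra.finrank_toSubmodule _).trans_le (finrank_range_conjRealDiagonal_le P)

end RealDiagonal

theorem asdc_imp_real_algebra_dim_le_general
    {n m : ℕ} (A : Fin (m + 1) → Matrix (Fin n) (Fin n) ℂ)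
    (hA1 : IsUnit (A 0))
    (hASDC : ∀ ε > (0 : ℝ), ∃ At : Fin (m + 1) → Matrix (Fin n) (Fin n) ℂ,
      (∀ i, (At i).IsHermitian) ∧ (∀ i, ‖A i - At i‖ ≤ ε) ∧
      ∃ P : Matrix (Fin n) (Fin n) ℂ, IsUnit P ∧ ∀ i, (Pᴴ * At i * P).IsDiag) :
    Module.finrank ℝ
      (Algebra.adjoin ℝ (Set.range fun i => (A 0)⁻¹ * A i)) ≤ n := by
  have hinv : ContinuousAt (fun C : Fin (m + 1) → Matrix (Fin n) (Fin n) ℂ =>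
      fun i => (C 0)⁻¹ * C i) A := by
    have h0 : ContinuousAt Inv.inv (A 0) := continuousAt_matrix_inv _ <|
      NormedRing.inverse_continuousAt ((isUnit_iff_isUnit_det _).mp hA1).unit
    exact continuousAt_pi.mpr fun i =>
      (h0.comp (f := fun C => C 0) (continuous_apply 0).continuousAt).mul
        (continuous_apply i).continuousAt
  have hlsc : LowerSemicontinuousAt (fun C : Fin (m + 1) → Matrix (Fin n) (Fin n) ℂ =>
      finrank ℝ (Algebra.adjoin ℝ (range fun i => (C 0)⁻¹ * C i))) A :=
    (lowerSemicontinuous_finrank_adjoin_range _).comp hinv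
  have hSDC : ∃ᶠ C in 𝓝 A, (∀ i, (C i).IsHermitian) ∧
      ∃ P : Matrix (Fin n) (Fin n) ℂ, IsUnit P ∧ ∀ i, (Pᴴ * C i * P).IsDiag := by
    refine Metric.nhds_basis_closedBall.frequently_iff.mpr fun ε hε => ?_
    obtain ⟨At, hherm, hclose, hsdc⟩ := hASDC ε hε
    refine ⟨At, (dist_pi_le_iff hε.le).mpr fun i => ?_, hherm, hsdc⟩
    rw [dist_comm, dist_eq_norm]
    exact hclose i
  have hunit : ∀ᶠ C in 𝓝 A, IsUnit (C 0) :=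
    (continuous_apply 0).continuousAt.eventually (Units.isOpen.mem_nhds hA1)
  simpa using hlsc.frequently n <| (hSDC.and_eventually hunit).mono
    fun C ⟨⟨hherm, P, hP, hdiag⟩, h0⟩ => by
      simpa using finrank_adjoin_range_inv_mul_le_card hherm h0 hP hdiag

/-- If `{A_1, ..., A_m}` is an ASDC set of Hermitian matrices with `A_1` invertible, then
the real unital algebra generated by `{A_1⁻¹ * A_i}` has real dimension at most `n`. -/
theorem asdc_imp_real_algebra_dim_le
    {n m : ℕ} (A : Fin (m + 1) → Matrix (Fin n) (Fin n) ℂ)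
    (hherm : ∀ i, (A i).IsHermitian) (hA1 : IsUnit (A 0))
    (hASDC : ∀ ε > (0 : ℝ), ∃ At : Fin (m + 1) → Matrix (Fin n) (Fin n) ℂ,
      (∀ i, (At i).IsHermitian) ∧ (∀ i, ‖A i - At i‖ ≤ ε) ∧
      ∃ P : Matrix (Fin n) (Fin n) ℂ, IsUnit P ∧ ∀ i, (Pᴴ * At i * P).IsDiag) :
    Module.finrank ℝ
      (Algebra.adjoin ℝ (Set.range fun i => (A 0)⁻¹ * A i)) ≤ n :=
  asdc_imp_real_algebra_dim_le_general A hA1 hASDC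
end

section
/- There exist five 4×4 Hermitian matrices A_1,...,A_5 with A_1 invertible such that {A_1⁻¹A_1,...,A_1⁻¹A_5} is a commuting family of matrices with only real eigenvalues, yet {A_1,...,A_5} is not ASDC. Concretely, one may take A_1 the reversal (anti-identity) matrix F_4, A_2 = e_3e_4* + e_4e_3*, A_3 = −i e_3 e_4* + i e_4 e_3*, A_4 = e_3e_3*, A_5 = e_4e_4*; the real algebra generated by A_1⁻¹{A_1,...,A_5} has dimension 5 > 4, so by the dimension bound the set is not ASDC. -/
/-!
A family that is simultaneously diagonalizable by a congruence `P` spans, over `ℝ`, at most an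
`n`-dimensional space: `X ↦ Pᴴ X P` is injective and maps Hermitian matrices it diagonalizes
into the real diagonal matrices. The family `A₁, …, A₅`, on the other hand, is robustly
independent: the real coefficients of `M = ∑ c_j • obstructionFamily j` can be read off its
entries (`c₀` at `(0,3)`, `c₁ - i c₂` at `(2,3)`, `c₃` and `c₄` on the diagonal), so
`|c_j| ≤ ‖M‖`, and every `1/10`-perturbation of the family is still linearly independent,
hence not SDC in dimension 4.

Since `A₁⁻¹ = A₁` and each `A₁ A_k` (`k ≥ 2`) is supported in the upper-right `2 × 2` block,
all products `(A₁ A_j)(A₁ A_k)` with `j, k ≥ 2` vanish, which gives commutativity and nilpotency.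
-/

open Matrix Complex
open scoped Matrix.Norms.L2Operator

noncomputable def A₁ : Matrix (Fin 4) (Fin 4) ℂ := !![0,0,0,1; 0,0,1,0; 0,1,0,0; 1,0,0,0]
noncomputable def A₂ : Matrix (Fin 4) (Fin 4) ℂ := !![0,0,0,0; 0,0,0,0; 0,0,0,1; 0,0,1,0]
noncomputable def A₃ : Matrix (Fin 4) (Fin 4) ℂ :=
  !![0,0,0,0; 0,0,0,0; 0,0,0,-Complex.I; 0,0,Complex.I,0]
noncomputable def A₄ : Matrix (Fin 4) (Fin 4) ℂ := !![0,0,0,0; 0,0,0,0; 0,0,1,0; 0,0,0,0]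
noncomputable def A₅ : Matrix (Fin 4) (Fin 4) ℂ := !![0,0,0,0; 0,0,0,0; 0,0,0,0; 0,0,0,1]

noncomputable def obstructionFamily : Fin 5 → Matrix (Fin 4) (Fin 4) ℂ :=
  ![A₁, A₂, A₃, A₄, A₅]

theorem Matrix.norm_entry_le_l2_opNorm {𝕜 m n : Type*} [RCLike 𝕜] [Fintype m] [Fintype n]
    [DecidableEq n] (M : Matrix m n 𝕜) (i : m) (j : n) : ‖M i j‖ ≤ ‖M‖ := by
  have hcol : ‖WithLp.toLp 2 (M.col j)‖ ≤ ‖M‖ := by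
    simpa [PiLp.norm_single] using M.l2_opNorm_mulVec (EuclideanSpace.single j 1)
  exact (PiLp.norm_apply_le (WithLp.toLp 2 (M.col j)) i).trans hcol

theorem Matrix.mul_eq_zero_of_support {α l m n : Type*} [Fintype m]
    [NonUnitalNonAssocSemiring α] {X : Matrix l m α} {Y : Matrix m n α} (t : Set m)
    (hX : ∀ a b, X a b ≠ 0 → b ∈ t) (hY : ∀ b c, Y b c ≠ 0 → b ∉ t) : X * Y = 0 := by
  ext a c
  refine Finset.sum_eq_zero fun b _ => ?_
  by_cases hb : b ∈ t
  · by_contra h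
    exact hY b c (right_ne_zero_of_mul h) hb
  · by_contra h
    exact hb (hX a b (left_ne_zero_of_mul h))

theorem IsNilpotent.eq_zero_of_mem_spectrum {𝕜 A : Type*} [Field 𝕜] [Ring A] [Algebra 𝕜 A]
    [Nontrivial A] {a : A} (ha : IsNilpotent a) {μ : 𝕜} (hμ : μ ∈ spectrum 𝕜 a) : μ = 0 := by
  obtain ⟨k, hk⟩ := ha
  have hμk := spectrum.pow_mem_pow a k hμ
  rw [hk, spectrum.zero_eq, Set.mem_singleton_iff] at hμk
  exact eq_zero_of_pow_eq_zero hμk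

theorem Matrix.IsHermitian.eq_diagonal_ofReal {𝕜 n : Type*} [RCLike 𝕜] [DecidableEq n]
    {X : Matrix n n 𝕜} (hX : X.IsHermitian) (hd : X.IsDiag) :
    X = diagonal fun k => (RCLike.re (X k k) : 𝕜) := by
  conv_lhs => rw [← hd.diagonal_diag]
  congr 1
  funext k
  exact (hX.coe_re_apply_self k).symm

theorem card_le_of_linearIndependent_of_congr_isDiag {ι 𝕜 n : Type*} [Fintype ι] [RCLike 𝕜]
    [Fintype n] [DecidableEq n] {A : ι → Matrix n n 𝕜}
    (hA : ∀ i, (A i).IsHermitian) (hli : LinearIndependent ℝ A) {P : Matrix n n 𝕜}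
    (hP : IsUnit P) (hdiag : ∀ i, (Pᴴ * A i * P).IsDiag) :
    Fintype.card ι ≤ Fintype.card n := by
  let congrP : Matrix n n 𝕜 →ₗ[ℝ] Matrix n n 𝕜 :=
    LinearMap.mulLeft ℝ Pᴴ ∘ₗ LinearMap.mulRight ℝ P
  have hker : LinearMap.ker congrP = ⊥ := by
    refine LinearMap.ker_eq_bot.mpr fun X Y hXY => ?_
    have hPH : IsUnit Pᴴ := (isUnit_conjTranspose P).mpr hP
    exact hP.mul_left_injective (hPH.mul_right_injective (by simpa [congrP, mul_assoc] using hXY))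
  let diagOfReal : (n → ℝ) →ₗ[ℝ] Matrix n n 𝕜 :=
    diagonalLinearMap n ℝ 𝕜 ∘ₗ LinearMap.compLeft RCLike.ofRealCLM.toLinearMap n
  let d : ι → n → ℝ := fun i k => RCLike.re ((Pᴴ * A i * P) k k)
  have hcongr : congrP ∘ A = diagOfReal ∘ d := by
    funext i
    have h := (isHermitian_conjTranspose_mul_mul P (hA i)).eq_diagonal_ofReal (hdiag i)
    show Pᴴ * (A i * P) = _
    rwa [← mul_assoc]
  have hd : LinearIndependent ℝ d := .of_comp diagOfReal (hcongr ▸ hli.map' congrP hker)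
  simpa using hd.fintype_card_le_finrank

theorem linearIndependent_of_norm_sub_le {ι 𝕜 E : Type*} [Fintype ι] [RCLike 𝕜]
    [NormedAddCommGroup E] [NormedSpace 𝕜 E] [Module ℝ E] [IsScalarTower ℝ 𝕜 E]
    {A B : ι → E} {ε : ℝ} (hA : ∀ (c : ι → ℝ) i, |c i| ≤ ‖∑ j, c j • A j‖)
    (hε : Fintype.card ι * ε < 1) (hB : ∀ i, ‖A i - B i‖ ≤ ε) : LinearIndependent ℝ B := by
  rw [Fintype.linearIndependent_iff]
  intro c hc
  set S := ∑ j, |c j|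
  have hcS : ∀ i, |c i| ≤ ε * S := fun i => calc
    |c i| ≤ ‖∑ j, c j • A j‖ := hA c i
    _ = ‖∑ j, c j • (A j - B j)‖ := by simp [smul_sub, Finset.sum_sub_distrib, hc]
    _ ≤ ∑ j, ‖c j • (A j - B j)‖ := norm_sum_le _ _
    _ ≤ ∑ j, |c j| * ε := Finset.sum_le_sum fun j _ => by
      rw [RCLike.real_smul_eq_coe_smul (K := 𝕜), norm_smul, RCLike.norm_ofReal]
      exact mul_le_mul_of_nonneg_left (hB j) (abs_nonneg _)
    _ = ε * S := by rw [← Finset.sum_mul, mul_comm]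
  have hS : S ≤ Fintype.card ι * ε * S := calc
    S ≤ ∑ _j : ι, ε * S := Finset.sum_le_sum fun j _ => hcS j
    _ = Fintype.card ι * ε * S := by simp [mul_assoc]
  have hS0 : S = 0 := by
    have : 0 ≤ S := Finset.sum_nonneg fun j _ => abs_nonneg (c j)
    nlinarith
  intro i
  exact abs_eq_zero.mp <| (Finset.sum_eq_zero_iff_of_nonneg fun j _ => abs_nonneg (c j)).mp hS0
    i (Finset.mem_univ i)

theorem A₁_mul_A₁ : A₁ * A₁ = 1 := by
  ext a b
  fin_cases a <;> fin_cases b <;> simp [A₁, mul_apply, Fin.sum_univ_four, one_apply]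

theorem isUnit_A₁ : IsUnit A₁ := IsUnit.of_mul_eq_one _ A₁_mul_A₁

theorem inv_A₁ : A₁⁻¹ = A₁ := inv_eq_right_inv A₁_mul_A₁

theorem isHermitian_obstructionFamily (k : Fin 5) : (obstructionFamily k).IsHermitian := by
  fin_cases k <;> ext a b <;> fin_cases a <;> fin_cases b <;>
    simp [obstructionFamily, A₁, A₂, A₃, A₄, A₅]

theorem A₁_mul_obstructionFamily_apply_ne_zero {k : Fin 5} (hk : k ≠ 0) {a b : Fin 4}
    (h : (A₁ * obstructionFamily k) a b ≠ 0) : a < 2 ∧ 2 ≤ b := by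
  fin_cases k
  · exact absurd rfl hk
  all_goals fin_cases a <;> fin_cases b <;>
    simp_all [obstructionFamily, A₁, A₂, A₃, A₄, A₅, mul_apply, Fin.sum_univ_four]

theorem A₁_mul_obstructionFamily_mul_eq_zero {j k : Fin 5} (hj : j ≠ 0) (hk : k ≠ 0) :
    A₁ * obstructionFamily j * (A₁ * obstructionFamily k) = 0 :=
  mul_eq_zero_of_support {b | 2 ≤ b}
    (fun _ _ h => (A₁_mul_obstructionFamily_apply_ne_zero hj h).2)
    (fun _ _ h => not_le.mpr (A₁_mul_obstructionFamily_apply_ne_zero hk h).1)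

theorem commute_inv_A₁_mul_obstructionFamily (j k : Fin 5) :
    Commute (A₁⁻¹ * obstructionFamily j) (A₁⁻¹ * obstructionFamily k) := by
  have h₀ : A₁⁻¹ * obstructionFamily 0 = 1 := by rw [inv_A₁]; exact A₁_mul_A₁
  rcases eq_or_ne j 0 with rfl | hj
  · exact h₀ ▸ Commute.one_left _
  rcases eq_or_ne k 0 with rfl | hk
  · exact h₀ ▸ Commute.one_right _
  rw [Commute, SemiconjBy, inv_A₁, A₁_mul_obstructionFamily_mul_eq_zero hj hk,
    A₁_mul_obstructionFamily_mul_eq_zero hk hj]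

theorem im_eq_zero_of_mem_spectrum_inv_A₁_mul_obstructionFamily (k : Fin 5) (μ : ℂ)
    (hμ : μ ∈ spectrum ℂ (A₁⁻¹ * obstructionFamily k)) : μ.im = 0 := by
  rw [inv_A₁] at hμ
  rcases eq_or_ne k 0 with rfl | hk
  · rw [show A₁ * obstructionFamily 0 = 1 from A₁_mul_A₁, spectrum.one_eq,
      Set.mem_singleton_iff] at hμ
    simp [hμ]
  · have hμ0 := IsNilpotent.eq_zero_of_mem_spectrum
      ⟨2, (sq _).trans (A₁_mul_obstructionFamily_mul_eq_zero hk hk)⟩ hμ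
    simp [hμ0]

theorem abs_le_norm_sum_smul_obstructionFamily (c : Fin 5 → ℝ) (i : Fin 5) :
    |c i| ≤ ‖∑ j, c j • obstructionFamily j‖ := by
  set M := ∑ j, c j • obstructionFamily j
  have hM : M = !![0, 0, 0, (c 0 : ℂ); 0, 0, (c 0 : ℂ), 0;
      0, (c 0 : ℂ), c 3, c 1 - c 2 * I; c 0, 0, c 1 + c 2 * I, c 4] := by
    ext a b
    fin_cases a <;> fin_cases b <;>
      simp [M, Fin.sum_univ_five, obstructionFamily, A₁, A₂, A₃, A₄, A₅, sub_eq_add_neg]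
  have hentry := M.norm_entry_le_l2_opNorm
  fin_cases i
  · simpa [hM] using hentry 0 3
  · simpa [hM] using (abs_re_le_norm (M 2 3)).trans (hentry 2 3)
  · simpa [hM] using (abs_im_le_norm (M 2 3)).trans (hentry 2 3)
  · simpa [hM] using hentry 2 2
  · simpa [hM] using hentry 3 3

/-- There exist five `4×4` Hermitian matrices `A₁, ..., A₅` with `A₁` invertible such that
`{A₁⁻¹ A_i}` is a commuting family with only real eigenvalues, yet `{A₁, ..., A₅}` is not
ASDC. -/
theorem obstruction_m_eq_5 :
    (∀ i, (obstructionFamily i).IsHermitian) ∧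
    IsUnit A₁ ∧
    (∀ i j, Commute (A₁⁻¹ * obstructionFamily i) (A₁⁻¹ * obstructionFamily j)) ∧
    (∀ i, ∀ μ ∈ spectrum ℂ (A₁⁻¹ * obstructionFamily i), μ.im = 0) ∧
    ¬ (∀ ε > (0 : ℝ), ∃ At : Fin 5 → Matrix (Fin 4) (Fin 4) ℂ,
        (∀ i, (At i).IsHermitian) ∧ (∀ i, ‖obstructionFamily i - At i‖ ≤ ε) ∧
        ∃ P : Matrix (Fin 4) (Fin 4) ℂ, IsUnit P ∧ ∀ i, (Pᴴ * At i * P).IsDiag) := by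
  refine ⟨isHermitian_obstructionFamily, isUnit_A₁, commute_inv_A₁_mul_obstructionFamily,
    im_eq_zero_of_mem_spectrum_inv_A₁_mul_obstructionFamily, fun hASDC => ?_⟩
  obtain ⟨At, hAt, hclose, P, hP, hdiag⟩ := hASDC (1 / 10) (by norm_num)
  have hli : LinearIndependent ℝ At :=
    linearIndependent_of_norm_sub_le (𝕜 := ℂ) abs_le_norm_sum_smul_obstructionFamily
      (by norm_num) hclose
  have hcard := card_le_of_linearIndependent_of_congr_isDiag hAt hli hP hdiag
  simp at hcard
end

section
/- Let A_1,...,A_m ∈ H^n and d ∈ N. If {A_1,...,A_m} is d-RSDC, then the set {A_i ⊕ 0_d : i ∈ [m]} ⊆ H^{n+d} is ASDC. (Specifically, if Ã_i ∈ H^{n+d} are SDC matrices whose top-left n×n principal submatrices are the A_i, then conjugating by P_ε = diag(I_n, √ε I_d) produces SDC Hermitian matrices converging to A_i ⊕ 0_d as ε → 0.) -/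
open Matrix
open scoped Matrix.Norms.L2Operator

/-!
Conjugating each `Ãᵢ` by `D_t = diag(I_n, t I_d)` with `t ≠ 0` is a congruence by an invertible
matrix, so the family `D_tᴴ Ãᵢ D_t` stays Hermitian and SDC. Its top-left block is `Aᵢ` while the
other blocks carry a factor `t`, `t̄` or `|t|²`, so as `t → 0` it tends to `Aᵢ ⊕ 0_d`.
-/

open Filter Topology

namespace Matrix

variable {ι n p R : Type*} [DecidableEq n] [DecidableEq p]

def IsSimulDiagByCongruence [Fintype n] [Star R] [Semiring R] (B : ι → Matrix n n R) : Prop :=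
  ∃ P : Matrix n n R, IsUnit P ∧ ∀ i, (Pᴴ * B i * P).IsDiag

theorem IsSimulDiagByCongruence.conjTranspose_mul_mul [Fintype n] [CommRing R] [StarRing R]
    {B : ι → Matrix n n R} (hB : IsSimulDiagByCongruence B) {Q : Matrix n n R} (hQ : IsUnit Q) :
    IsSimulDiagByCongruence fun i => Qᴴ * B i * Q := by
  obtain ⟨P, hP, hdiag⟩ := hB
  have hQdet : IsUnit Q.det := (isUnit_iff_isUnit_det Q).mp hQ
  have hQHdet : IsUnit Qᴴ.det := by rw [det_conjTranspose]; exact hQdet.star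
  refine ⟨Q⁻¹ * P, (isUnit_nonsing_inv_iff.mpr hQ).mul hP, fun i => ?_⟩
  have hcancel : (Q⁻¹ * P)ᴴ * (Qᴴ * B i * Q) * (Q⁻¹ * P) = Pᴴ * B i * P := by
    simp only [conjTranspose_mul, conjTranspose_nonsing_inv, Matrix.mul_assoc,
      nonsing_inv_mul_cancel_left _ _ hQHdet, mul_nonsing_inv_cancel_left _ _ hQdet]
  rw [hcancel]
  exact hdiag i

def blockScale [Zero R] [One R] [SMul R R] (t : R) : Matrix (n ⊕ p) (n ⊕ p) R :=
  fromBlocks 1 0 0 (t • 1)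

theorem isUnit_blockScale [Fintype n] [Fintype p] [Field R] {t : R} (ht : t ≠ 0) :
    IsUnit (blockScale t : Matrix (n ⊕ p) (n ⊕ p) R) := by
  rw [isUnit_iff_isUnit_det, blockScale, det_fromBlocks_zero₂₁, det_smul]
  simp [ht]

theorem conjTranspose_blockScale_zero_mul_mul [Fintype n] [Fintype p] [Semiring R] [StarRing R]
    (M : Matrix (n ⊕ p) (n ⊕ p) R) :
    (blockScale 0)ᴴ * M * blockScale 0 = fromBlocks M.toBlocks₁₁ 0 0 0 := by
  conv_lhs => rw [← fromBlocks_toBlocks M]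
  simp [blockScale, fromBlocks_conjTranspose, fromBlocks_multiply]

theorem continuous_blockScale [Semiring R] [TopologicalSpace R] [IsTopologicalSemiring R] :
    Continuous (blockScale : R → Matrix (n ⊕ p) (n ⊕ p) R) :=
  continuous_const.matrix_fromBlocks continuous_const continuous_const
    (continuous_id.smul continuous_const)

theorem tendsto_conjTranspose_blockScale_mul_mul [Fintype n] [Fintype p] [Semiring R] [StarRing R]
    [TopologicalSpace R] [IsTopologicalSemiring R] [ContinuousStar R]
    (M : Matrix (n ⊕ p) (n ⊕ p) R) :
    Tendsto (fun t : R => (blockScale t)ᴴ * M * blockScale t) (𝓝 0)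
      (𝓝 (fromBlocks M.toBlocks₁₁ 0 0 0)) := by
  rw [← conjTranspose_blockScale_zero_mul_mul M]
  have hcont : Continuous fun t : R => (blockScale t)ᴴ * M * blockScale t :=
    (continuous_blockScale.matrix_conjTranspose.matrix_mul continuous_const).matrix_mul
      continuous_blockScale
  exact hcont.tendsto 0

end Matrix

theorem rsdc_imp_padded_asdc_general
    {n m d : ℕ} (A : Fin m → Matrix (Fin n) (Fin n) ℂ)
    (hRSDC : ∃ At : Fin m → Matrix (Fin n ⊕ Fin d) (Fin n ⊕ Fin d) ℂ,
      (∀ i, (At i).IsHermitian) ∧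
      (∀ i, ∀ a b : Fin n, At i (Sum.inl a) (Sum.inl b) = A i a b) ∧
      ∃ P : Matrix (Fin n ⊕ Fin d) (Fin n ⊕ Fin d) ℂ, IsUnit P ∧
        ∀ i, (Pᴴ * At i * P).IsDiag) :
    ∀ ε > (0 : ℝ), ∃ Bt : Fin m → Matrix (Fin n ⊕ Fin d) (Fin n ⊕ Fin d) ℂ,
      (∀ i, (Bt i).IsHermitian) ∧
      (∀ i, ‖Matrix.fromBlocks (A i) 0 0 (0 : Matrix (Fin d) (Fin d) ℂ) - Bt i‖ ≤ ε) ∧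
      ∃ P : Matrix (Fin n ⊕ Fin d) (Fin n ⊕ Fin d) ℂ, IsUnit P ∧
        ∀ i, (Pᴴ * Bt i * P).IsDiag := by
  obtain ⟨At, hAtH, hAtA, hSDC⟩ := hRSDC
  intro ε hε
  have hblock : ∀ i, (At i).toBlocks₁₁ = A i := fun i => Matrix.ext (hAtA i)
  have hclose : ∀ i, ∀ᶠ t : ℂ in 𝓝 0,
      ‖fromBlocks (A i) 0 0 0 - (blockScale t)ᴴ * At i * blockScale t‖ ≤ ε := fun i => by
    have hlim := tendsto_conjTranspose_blockScale_mul_mul (At i)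
    rw [hblock i] at hlim
    filter_upwards [hlim.eventually (Metric.closedBall_mem_nhds _ hε)] with t ht
    rwa [dist_comm, dist_eq_norm] at ht
  obtain ⟨t, htclose, ht0 : t ≠ 0⟩ :=
    (((eventually_all.2 hclose).filter_mono nhdsWithin_le_nhds).and
      (self_mem_nhdsWithin : ∀ᶠ t in 𝓝[≠] (0 : ℂ), t ≠ 0)).exists
  exact ⟨fun i => (blockScale t)ᴴ * At i * blockScale t,
    fun i => isHermitian_conjTranspose_mul_mul _ (hAtH i), htclose,
    IsSimulDiagByCongruence.conjTranspose_mul_mul hSDC (isUnit_blockScale ht0)⟩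

/-- If `{A_1, ..., A_m} ⊆ H^n` is `d`-RSDC, then `{A_i ⊕ 0_d} ⊆ H^{n+d}` is ASDC. -/
theorem rsdc_imp_padded_asdc
    {n m d : ℕ} (A : Fin m → Matrix (Fin n) (Fin n) ℂ)
    (hherm : ∀ i, (A i).IsHermitian)
    (hRSDC : ∃ At : Fin m → Matrix (Fin n ⊕ Fin d) (Fin n ⊕ Fin d) ℂ,
      (∀ i, (At i).IsHermitian) ∧
      (∀ i, ∀ a b : Fin n, At i (Sum.inl a) (Sum.inl b) = A i a b) ∧
      ∃ P : Matrix (Fin n ⊕ Fin d) (Fin n ⊕ Fin d) ℂ, IsUnit P ∧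
        ∀ i, (Pᴴ * At i * P).IsDiag) :
    ∀ ε > (0 : ℝ), ∃ Bt : Fin m → Matrix (Fin n ⊕ Fin d) (Fin n ⊕ Fin d) ℂ,
      (∀ i, (Bt i).IsHermitian) ∧
      (∀ i, ‖Matrix.fromBlocks (A i) 0 0 (0 : Matrix (Fin d) (Fin d) ℂ) - Bt i‖ ≤ ε) ∧
      ∃ P : Matrix (Fin n ⊕ Fin d) (Fin n ⊕ Fin d) ℂ, IsUnit P ∧
        ∀ i, (Pᴴ * Bt i * P).IsDiag :=
  rsdc_imp_padded_asdc_general A hRSDC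
end

section
/- Let A_1,...,A_m ∈ H^n, b_1,...,b_m ∈ C^n, c_1,...,c_m ∈ R, and define Q_i = [[A_i, b_i],[b_i*, c_i]] ∈ H^{n+1}. Suppose the real span of {A_1,...,A_m} contains a positive definite matrix. If {Q_1,...,Q_m, e_{n+1}e_{n+1}*} is SDC, then {A_1,...,A_m} is SDC. -/
open Matrix
open scoped ComplexOrder

/-- If the real span of `{A_1, ..., A_m}` contains a positive definite matrix and the
bordered matrices `Q_i = [[A_i, b_i], [b_i*, c_i]]` together with `e_{n+1} e_{n+1}*` are
SDC, then `{A_1, ..., A_m}` is SDC. -/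
theorem sdc_of_homogenized_sdc
    {n m : ℕ} (A : Fin m → Matrix (Fin n) (Fin n) ℂ)
    (b : Fin m → (Fin n → ℂ)) (c : Fin m → ℝ)
    (hherm : ∀ i, (A i).IsHermitian)
    (hpd : ∃ S ∈ Submodule.span ℝ (Set.range A), S.PosDef)
    (Q : Fin m → Matrix (Fin n ⊕ Unit) (Fin n ⊕ Unit) ℂ)
    (hQ : ∀ i, Q i = Matrix.fromBlocks (A i)
      (Matrix.of fun a (_ : Unit) => b i a)
      (Matrix.of fun (_ : Unit) a => star (b i a))
      (Matrix.of fun (_ _ : Unit) => (c i : ℂ)))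
    (hSDC : ∃ P : Matrix (Fin n ⊕ Unit) (Fin n ⊕ Unit) ℂ, IsUnit P ∧
      (∀ i, (Pᴴ * Q i * P).IsDiag) ∧
      (Pᴴ * Matrix.fromBlocks (0 : Matrix (Fin n) (Fin n) ℂ) 0 0 1 * P).IsDiag) :
    ∃ R : Matrix (Fin n) (Fin n) ℂ, IsUnit R ∧ ∀ i, (Rᴴ * A i * R).IsDiag := by
  classical
  obtain ⟨P, hPu, hdQ, hdE⟩ := hSDC
  set v : (Fin n ⊕ Unit) → ℂ := fun j => P (Sum.inr ()) j with hv
  -- entries of Pᴴ E P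
  have hE : Pᴴ * Matrix.fromBlocks (0 : Matrix (Fin n) (Fin n) ℂ) 0 0 1 * P
      = Matrix.of fun α β => star (v α) * v β := by
    ext α β
    rw [Matrix.mul_assoc]
    simp [Matrix.mul_apply, Fintype.sum_sum_type, Matrix.conjTranspose_apply, hv]
  -- bottom row of P is nonzero somewhere
  have hk : ∃ k, v k ≠ 0 := by
    by_contra h
    push_neg at h
    obtain ⟨Pi, hPi⟩ := hPu.exists_right_inv
    have h1 : (P * Pi) (Sum.inr ()) (Sum.inr ()) = 1 := by rw [hPi]; simp
    rw [Matrix.mul_apply] at h1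
    simp only [show ∀ j, P (Sum.inr ()) j = 0 from h] at h1
    simp at h1
  obtain ⟨k, hk⟩ := hk
  have hvz : ∀ j, j ≠ k → v j = 0 := by
    intro j hj
    have h0 := hdE (show k ≠ j from fun h => hj h.symm)
    rw [hE] at h0
    simp only [Matrix.of_apply] at h0
    rcases mul_eq_zero.mp h0 with h | h
    · exact absurd (by simpa using h) hk
    · exact h
  set σ : Equiv.Perm (Fin n ⊕ Unit) := Equiv.swap k (Sum.inr ()) with hσ
  set P' : Matrix (Fin n ⊕ Unit) (Fin n ⊕ Unit) ℂ := P.submatrix id σ with hP'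
  have hσk : ∀ l : Fin n, σ (Sum.inl l) ≠ k := by
    intro l
    by_cases h : (Sum.inl l : Fin n ⊕ Unit) = k
    · rw [hσ, h, Equiv.swap_apply_left, ← h]; simp
    · rw [hσ, Equiv.swap_apply_of_ne_of_ne h (by simp)]; exact h
  have hbot : ∀ l, P' (Sum.inr ()) (Sum.inl l) = 0 := fun l => hvz _ (hσk l)
  -- conjugation by P' is conjugation by P composed with a permutation
  have key : ∀ M : Matrix (Fin n ⊕ Unit) (Fin n ⊕ Unit) ℂ,
      P'ᴴ * M * P' = (Pᴴ * M * P).submatrix σ σ := by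
    intro M
    ext α β
    simp [hP', Matrix.mul_apply, Matrix.conjTranspose_apply]
  have hdQ' : ∀ i, (P'ᴴ * Q i * P').IsDiag := by
    intro i
    rw [key]
    exact (hdQ i).submatrix σ.injective
  have hP'u : IsUnit P' := by
    rw [Matrix.isUnit_iff_isUnit_det, hP', Matrix.det_permute' σ P]
    refine IsUnit.mul ?_ ((Matrix.isUnit_iff_isUnit_det P).mp hPu)
    rcases Int.units_eq_one_or σ.sign with h | h <;> simp [h]
  -- P' is block upper triangular
  have hP'blocks : P' = Matrix.fromBlocks P'.toBlocks₁₁ P'.toBlocks₁₂ 0 P'.toBlocks₂₂ := by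
    have h21 : P'.toBlocks₂₁ = 0 := by
      ext u l
      exact hbot l
    rw [← h21, Matrix.fromBlocks_toBlocks]
  refine ⟨P'.toBlocks₁₁, ?_, ?_⟩
  · have hdet : IsUnit P'.det := (Matrix.isUnit_iff_isUnit_det P').mp hP'u
    rw [hP'blocks, Matrix.det_fromBlocks_zero₂₁] at hdet
    exact (Matrix.isUnit_iff_isUnit_det _).mpr (isUnit_of_mul_isUnit_left hdet)
  · intro i
    have h := hdQ' i
    rw [hQ i] at h
    rw [hP'blocks, Matrix.fromBlocks_conjTranspose, Matrix.fromBlocks_multiply,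
      Matrix.fromBlocks_multiply, Matrix.isDiag_fromBlocks_iff] at h
    have h11 := h.1
    simpa [Matrix.mul_assoc] using h11
end
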